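/- arXiv:2602.02976 — 8 statements merged into one kernel-verified Lean document; each statement's English description precedes it below -/
import Mathlib

section
/- Let κ = ⟨κ₀ ≤ … ≤ κ_n⟩ be a weakly increasing tuple of infinite cardinals and let A ⊆ {0,…,n} be such that both A and its complement A^c are nonempty. Then the set C_A of continuous functions D_A → ℤ/2 has cardinality exactly (κ_{max A^c})^(κ_{max A}) (cardinal exponentiation). -/
set_option linter.unusedSectionVars false

open Cardinal Function OnePoint

noncomputable section

instance (o : Ordinal) : TopologicalSpace o.ToType := ⊥
instance (o : Ordinal) : DiscreteTopology o.ToType := ⟨rfl⟩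
instance : TopologicalSpace (ZMod 2) := ⊥
instance : DiscreteTopology (ZMod 2) := ⟨rfl⟩

/-- `Alpha c` : the one-point compactification of the discrete space of cardinality `c`. -/
abbrev Alpha (c : Cardinal) : Type := OnePoint c.ord.ToType

variable {ι : Type} [Fintype ι] [DecidableEq ι]

/-- `DD κ A` : the set of points `x ∈ X(κ)` with `x i ≠ ∞` for all `i ∈ A`. -/
def DD (κ : ι → Cardinal) (A : Finset ι) : Set (∀ i, Alpha (κ i)) :=
  {x | ∀ i ∈ A, x i ≠ ∞}

/-- `FF κ A` : the `A`-facet of `X(κ)`. -/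
def FF (κ : ι → Cardinal) (A : Finset ι) : Set (∀ i, Alpha (κ i)) :=
  {x | ∀ i, x i ≠ ∞ ↔ i ∈ A}

/-- `X(κ)⁻`, the complement of the point `(∞,…,∞)`. -/
def Xminus (κ : ι → Cardinal) : Set (∀ i, Alpha (κ i)) :=
  {x | ∃ i, x i ≠ ∞}

/-- A (raw) cochain: a family of functions on the `DD κ A`. -/
abbrev Cochain (κ : ι → Cardinal) : Type :=
  ∀ A : Finset ι, ↥(DD κ A) → ZMod 2

/-- Restriction of a function on `D_A` to `D_B`, for `A ⊆ B`. -/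
def res {κ : ι → Cardinal} {A B : Finset ι} (h : A ⊆ B)
    (f : ↥(DD κ A) → ZMod 2) : ↥(DD κ B) → ZMod 2 :=
  fun x => f ⟨x.1, fun i hi => x.2 i (h hi)⟩

/-- The Čech coboundary `(df)_A = ∑_{i ∈ A} f_{A ∖ {i}}` (restricted to `D_A`). -/
def cb (κ : ι → Cardinal) (f : Cochain κ) : Cochain κ :=
  fun A x => ∑ i ∈ A, res (Finset.erase_subset i A) (f (A.erase i)) x

/-- `f` is a `k`-cochain: each `f_A` for `|A| = k+1` is continuous. -/
def IsCochain (κ : ι → Cardinal) (k : ℕ) (f : Cochain κ) : Prop :=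
  ∀ A : Finset ι, A.card = k + 1 → Continuous (f A)

/-- `f` is a `k`-cocycle. -/
def IsCocycle (κ : ι → Cardinal) (k : ℕ) (f : Cochain κ) : Prop :=
  IsCochain κ k f ∧ ∀ A : Finset ι, A.card = k + 2 → ∀ x, cb κ f A x = 0

/-- `f` is a `k`-coboundary: `f = dg` for some `(k-1)`-cochain `g`. -/
def IsCoboundary (κ : ι → Cardinal) (k : ℕ) (f : Cochain κ) : Prop :=
  ∃ g : Cochain κ, IsCochain κ (k - 1) g ∧
    ∀ A : Finset ι, A.card = k + 1 → ∀ x, f A x = cb κ g A x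

/-- `Y` is a `k`-Fubini partition of `X(κ)⁻`. -/
def IsFubini (κ : ι → Cardinal) (k : ℕ) (Y : ι → Set (∀ i, Alpha (κ i))) : Prop :=
  Pairwise (Disjoint on Y) ∧ (⋃ i, Y i) = Xminus κ ∧
  ∀ A : Finset ι, k + 1 ≤ A.card →
    (∀ i ∉ A, IsClopen ((Subtype.val : ↥(DD κ A) → _) ⁻¹' Y i)) ∧
    {x : ↥(Xminus κ) | (x : ∀ i, Alpha (κ i)) ∈ FF κ A} ⊆
      interior ((Subtype.val : ↥(Xminus κ) → _) ⁻¹' ⋃ i ∈ A, Y i)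

/-- `f` is a top-degree coboundary: a sum of functions, each extending continuously to
`D_{univ ∖ {j}}`. -/
def TopCoboundary (κ : ι → Cardinal)
    (f : (∀ i, (κ i).ord.ToType) → ZMod 2) : Prop :=
  ∃ g : ι → ((∀ i, (κ i).ord.ToType) → ZMod 2),
    (∀ x, f x = ∑ j, g j x) ∧
    ∀ j : ι, ∃ G : ↥(DD κ (Finset.univ.erase j)) → ZMod 2, Continuous G ∧
      ∀ x, g j x = G ⟨fun i => ((x i : (κ i).ord.ToType) : Alpha (κ i)),
        fun i _ => OnePoint.coe_ne_infty (x i)⟩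

/-- The group of `k`-cocycles. -/
def Zgrp (κ : ι → Cardinal) (k : ℕ) : AddSubgroup (Cochain κ) :=
  AddSubgroup.closure {f | IsCocycle κ k f}

/-- The group of `k`-coboundaries. -/
def Bgrp (κ : ι → Cardinal) (k : ℕ) : AddSubgroup (Cochain κ) :=
  AddSubgroup.closure {f | IsCoboundary κ k f}

/-- The `k`-th Čech cohomology group of `X(κ)⁻` with `ℤ/2` coefficients. -/
abbrev Hgrp (κ : ι → Cardinal) (k : ℕ) :=
  ↥(Zgrp κ k) ⧸ (Bgrp κ k).addSubgroupOf (Zgrp κ k)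

/-- The cohomology class of a `k`-cocycle. -/
abbrev mkH (κ : ι → Cardinal) (k : ℕ) (f : Cochain κ) (hf : IsCocycle κ k f) : Hgrp κ k :=
  QuotientAddGroup.mk ⟨f, AddSubgroup.subset_closure hf⟩

/-- Combine a point of `∏_{i ∉ B} α(κ i)` with a point of `∏_{i ∈ B} κ i`. -/
def combineBC (κ : ι → Cardinal) (B : Finset ι)
    (x : ∀ i : {i : ι // i ∉ B}, Alpha (κ i))
    (y : ∀ i : ↥B, (κ (i : ι)).ord.ToType) : ∀ i, Alpha (κ i) :=
  fun i => if h : i ∈ B then ((y ⟨i, h⟩ : (κ i).ord.ToType) : Alpha (κ i)) else x ⟨i, h⟩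

lemma combineBC_mem (κ : ι → Cardinal) (B : Finset ι)
    (x : ∀ i : {i : ι // i ∉ B}, Alpha (κ i))
    (y : ∀ i : ↥B, (κ (i : ι)).ord.ToType) : combineBC κ B x y ∈ DD κ B := by
  intro i hi
  simp only [combineBC, dif_pos hi]
  exact OnePoint.coe_ne_infty _

/-- The point `y^∞` : `y` on coordinates in `B`, `∞` outside `B`. -/
def extendInfty (κ : ι → Cardinal) (B : Finset ι)
    (y : ∀ i : ↥B, (κ (i : ι)).ord.ToType) : ∀ i, Alpha (κ i) :=
  combineBC κ B (fun _ => ∞) y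

lemma extendInfty_mem (κ : ι → Cardinal) (B : Finset ι)
    (y : ∀ i : ↥B, (κ (i : ι)).ord.ToType) : extendInfty κ B y ∈ DD κ B :=
  combineBC_mem κ B _ y

/-- The face restriction map `Res^k_B`. -/
def ResB (κ : ι → Cardinal) (B : Finset ι) (f : Cochain κ) :
    (∀ i : ↥B, (κ (i : ι)).ord.ToType) → ZMod 2 :=
  fun y => f B ⟨extendInfty κ B y, extendInfty_mem κ B y⟩

/-- The map `φ_{f,B}` sending `x` to `f_B(x, ·)`. -/
def phiMap (κ : ι → Cardinal) (B : Finset ι) (f : Cochain κ) :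
    (∀ i : {i : ι // i ∉ B}, Alpha (κ i)) → (∀ i : ↥B, (κ (i : ι)).ord.ToType) → ZMod 2 :=
  fun x y => f B ⟨combineBC κ B x y, combineBC_mem κ B x y⟩

/-- Combine a point `x` (used on the first `n-k+1` coordinates) with a tuple `y ∈ Q`
of values on the last `k` coordinates. -/
def combineQ {n : ℕ} (κ : Fin (n + 1) → Cardinal) (k : ℕ)
    (x : ∀ i, Alpha (κ i))
    (y : ∀ i : {i : Fin (n + 1) // n - k + 1 ≤ (i : ℕ)}, (κ (i : Fin (n + 1))).ord.ToType) :
    ∀ i, Alpha (κ i) :=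
  fun i => if h : n - k + 1 ≤ (i : ℕ) then
    ((y ⟨i, h⟩ : (κ i).ord.ToType) : Alpha (κ i)) else x i


/-!
Splitting off the coordinates in `A` identifies `D_A` with `D × K`, where
`D = ∏_{i ∈ A} κᵢ` is discrete and `K = ∏_{i ∉ A} α(κᵢ)` is compact, so that continuous maps
`D_A → ℤ/2` are arbitrary maps `D → C(K, ℤ/2)`. Here `|D| = κ_{max A}`, and
`|C(K, ℤ/2)| = κ_{max Aᶜ}`: by compactness each fibre of a continuous map on `K` is a finite union
of boxes from a basis of cardinality `κ_{max Aᶜ}`, while the indicators of the clopen sets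
`{x | x_{max Aᶜ} = e}` are pairwise distinct.
-/
open TopologicalSpace

universe u

open Classical in
theorem Cardinal.mk_finset_le_max (α : Type u) : #(Finset α) ≤ max ℵ₀ #α :=
  (mk_le_of_surjective List.toFinset_surjective).trans (mk_list_le_max α)

theorem Cardinal.mk_pi_le_of_finite {J : Type u} [Finite J] {X : J → Type u} {c : Cardinal.{u}}
    (hc : ℵ₀ ≤ c) (hX : ∀ j, #(X j) ≤ c) : #(∀ j, X j) ≤ c := by
  obtain ⟨n, hn⟩ := lt_aleph0.1 (lt_aleph0_of_finite J)
  calc #(∀ j, X j) = prod fun j => #(X j) := mk_pi X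
    _ ≤ prod fun _ : J => c := prod_le_prod _ _ hX
    _ = c ^ n := by rw [prod_const', hn, power_natCast]
    _ ≤ c := power_nat_le hc

theorem Cardinal.mk_pi_eq_of_forall_le {J : Type u} [Finite J] {X : J → Type u}
    [∀ j, Nonempty (X j)] (j₀ : J) (hX : ∀ j, #(X j) ≤ #(X j₀)) (hj₀ : ℵ₀ ≤ #(X j₀)) :
    #(∀ j, X j) = #(X j₀) := by
  classical
  refine le_antisymm (mk_pi_le_of_finite hj₀ hX) ?_
  exact mk_le_of_injective (update_injective (fun j => Classical.arbitrary (X j)) j₀)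

theorem mk_continuous_le_of_isTopologicalBasis {X Y B : Type u} [TopologicalSpace X]
    [CompactSpace X] [TopologicalSpace Y] [DiscreteTopology Y] [Finite Y] (b : B → Set X)
    (hb : IsTopologicalBasis (Set.range b)) :
    #{f : X → Y // Continuous f} ≤ max ℵ₀ #B := by
  have hfiber (f : {f : X → Y // Continuous f}) (y : Y) :
      ∃ s : Finset B, f.1 ⁻¹' {y} = ⋃ i ∈ s, b i := by
    obtain ⟨s, hs, h⟩ := eq_finite_iUnion_of_isTopologicalBasis_of_isCompact_open b hb _
      ((isClosed_discrete {y}).preimage f.2).isCompact ((isOpen_discrete {y}).preimage f.2)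
    exact ⟨hs.toFinset, by simpa using h⟩
  choose s hs using hfiber
  have hinj : Injective s := by
    intro f g hfg
    ext x
    have hx : x ∈ g.1 ⁻¹' {f.1 x} := by rw [hs, ← hfg, ← hs]; rfl
    exact hx.symm
  obtain ⟨n, hn⟩ := lt_aleph0.1 (lt_aleph0_of_finite Y)
  calc #{f : X → Y // Continuous f} ≤ #(Y → Finset B) := mk_le_of_injective hinj
    _ = #(Finset B) ^ n := by rw [← power_def, hn, power_natCast]
    _ ≤ (max ℵ₀ #B) ^ n := power_le_power_right (mk_finset_le_max B)
    _ ≤ max ℵ₀ #B := power_nat_le le_sup_left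

theorem isTopologicalBasis_range_univ_pi {J : Type*} [Finite J] {X : J → Type*}
    [∀ j, TopologicalSpace (X j)] {B : J → Type*} {b : ∀ j, B j → Set (X j)}
    (hb : ∀ j, IsTopologicalBasis (Set.range (b j))) :
    IsTopologicalBasis (Set.range fun β : ∀ j, B j => Set.univ.pi fun j => b j (β j)) := by
  refine isTopologicalBasis_of_isOpen_of_nhds ?_ ?_
  · rintro _ ⟨β, rfl⟩
    exact isOpen_set_pi Set.finite_univ fun j _ => (hb j).isOpen ⟨β j, rfl⟩
  · intro x u hx hu
    obtain ⟨v, hv, hvu⟩ := isOpen_pi_iff'.1 hu x hx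
    have hbox (j : J) : ∃ i, x j ∈ b j i ∧ b j i ⊆ v j := by
      obtain ⟨_, ⟨i, rfl⟩, hi⟩ := (hb j).exists_subset_of_mem_open (hv j).2 (hv j).1
      exact ⟨i, hi⟩
    choose β hxβ hβv using hbox
    exact ⟨_, ⟨β, rfl⟩, fun j _ => hxβ j, (Set.pi_mono fun j _ => hβv j).trans hvu⟩

namespace OnePoint

variable {X : Type*}

def ofNeInfty {z : OnePoint X} (hz : z ≠ ∞) : X :=
  (ne_infty_iff_exists.1 hz).choose

@[simp]
theorem coe_ofNeInfty {z : OnePoint X} (hz : z ≠ ∞) : ((ofNeInfty hz : X) : OnePoint X) = z :=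
  (ne_infty_iff_exists.1 hz).choose_spec

@[simp]
theorem ofNeInfty_coe (x : X) : ofNeInfty (coe_ne_infty x) = x :=
  coe_injective (coe_ofNeInfty _)

variable [TopologicalSpace X] [DiscreteTopology X]

theorem isOpen_singleton_coe (x : X) : IsOpen ({(x : OnePoint X)} : Set (OnePoint X)) := by
  rw [← Set.image_singleton]
  exact isOpen_image_coe.2 (isOpen_discrete _)

theorem isClopen_singleton_coe (x : X) : IsClopen ({(x : OnePoint X)} : Set (OnePoint X)) :=
  ⟨isClosed_singleton, isOpen_singleton_coe x⟩

variable (X) in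
theorem isTopologicalBasis_range_sumElim :
    IsTopologicalBasis (Set.range (Sum.elim (fun x : X => ({(x : OnePoint X)} : Set (OnePoint X)))
      fun s : Finset X => ((↑) '' (s : Set X))ᶜ)) := by
  refine isTopologicalBasis_of_isOpen_of_nhds ?_ ?_
  · rintro _ ⟨x | s, rfl⟩
    · exact isOpen_singleton_coe x
    · exact isOpen_compl_image_coe.2 ⟨isClosed_discrete _, s.finite_toSet.isCompact⟩
  · intro p u hp hu
    induction p using OnePoint.rec with
    | infty =>
      have hfin : ((↑) ⁻¹' u : Set X)ᶜ.Finite :=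
        isCompact_iff_finite.1 ((isOpen_iff_of_mem' hp).1 hu).1
      refine ⟨_, ⟨Sum.inr hfin.toFinset, rfl⟩, infty_notMem_image_coe, fun z hz => ?_⟩
      induction z using OnePoint.rec with
      | infty => exact hp
      | coe y => simpa using hz
    | coe x => exact ⟨_, ⟨Sum.inl x, rfl⟩, rfl, Set.singleton_subset_iff.2 hp⟩

end OnePoint

theorem mk_continuous_pi_onePoint_le {J : Type u} [Finite J] {X : J → Type u}
    [∀ j, TopologicalSpace (X j)] [∀ j, DiscreteTopology (X j)] {Y : Type u} [TopologicalSpace Y]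
    [DiscreteTopology Y] [Finite Y] {c : Cardinal.{u}} (hc : ℵ₀ ≤ c) (hX : ∀ j, #(X j) ≤ c) :
    #{f : (∀ j, OnePoint (X j)) → Y // Continuous f} ≤ c := by
  refine (mk_continuous_le_of_isTopologicalBasis _ (isTopologicalBasis_range_univ_pi
    fun j => OnePoint.isTopologicalBasis_range_sumElim (X j))).trans (max_le hc ?_)
  refine mk_pi_le_of_finite hc fun j => ?_
  rw [mk_sum, lift_id, lift_id]
  exact add_le_of_le hc (hX j) ((mk_finset_le_max _).trans (max_le hc (hX j)))

theorem le_mk_continuous_pi_onePoint {J : Type} {X : J → Type} [∀ j, TopologicalSpace (X j)]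
    [∀ j, DiscreteTopology (X j)] (j : J) :
    #(X j) ≤ #{f : (∀ j, OnePoint (X j)) → ZMod 2 // Continuous f} := by
  classical
  let U (x : X j) : Set (∀ j, OnePoint (X j)) := (fun p => p j) ⁻¹' {(x : OnePoint (X j))}
  have hU (x : X j) : IsClopen (U x) :=
    (OnePoint.isClopen_singleton_coe x).preimage (continuous_apply j)
  refine mk_le_of_injective (f := fun x => ⟨LocallyConstant.charFn (ZMod 2) (hU x),
    (LocallyConstant.charFn (ZMod 2) (hU x)).continuous⟩) fun x y hxy => ?_
  have hUxy : U x = U y := LocallyConstant.charFn_inj (ZMod 2) (hU x) (hU y)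
    (LocallyConstant.coe_inj.1 (congrArg Subtype.val hxy))
  have hmem : update (fun _ => ∞) j (x : OnePoint (X j)) ∈ U y := hUxy ▸ by simp [U]
  simpa [U] using hmem

theorem mk_continuous_pi_onePoint {J : Type} [Finite J] {X : J → Type}
    [∀ j, TopologicalSpace (X j)] [∀ j, DiscreteTopology (X j)] (j₀ : J)
    (hX : ∀ j, #(X j) ≤ #(X j₀)) (hj₀ : ℵ₀ ≤ #(X j₀)) :
    #{f : (∀ j, OnePoint (X j)) → ZMod 2 // Continuous f} = #(X j₀) :=
  le_antisymm (mk_continuous_pi_onePoint_le hj₀ hX) (le_mk_continuous_pi_onePoint j₀)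

def Homeomorph.subtypeContinuousCongr {X X' : Type*} (Y : Type*) [TopologicalSpace X]
    [TopologicalSpace X'] [TopologicalSpace Y] (e : X ≃ₜ X') :
    {f : X → Y // Continuous f} ≃ {f : X' → Y // Continuous f} :=
  (e.toEquiv.arrowCongr (Equiv.refl Y)).subtypeEquiv fun _ => e.symm.comp_continuous_iff'.symm

def continuousProdEquivOfDiscrete (D K Y : Type*) [TopologicalSpace D] [DiscreteTopology D]
    [TopologicalSpace K] [TopologicalSpace Y] :
    {f : D × K → Y // Continuous f} ≃ (D → {g : K → Y // Continuous g}) where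
  toFun f d := ⟨fun k => f.1 (d, k), continuous_prod_of_discrete_left.1 f.2 d⟩
  invFun g := ⟨fun p => (g p.1).1 p.2, continuous_prod_of_discrete_left.2 fun d => (g d).2⟩

theorem mk_continuous_prod_of_discrete (D K Y : Type u) [TopologicalSpace D] [DiscreteTopology D]
    [TopologicalSpace K] [TopologicalSpace Y] :
    #{f : D × K → Y // Continuous f} = #{g : K → Y // Continuous g} ^ #D := by
  rw [power_def, mk_congr (continuousProdEquivOfDiscrete D K Y)]

def ddHomeomorphProd {J : Type} [DecidableEq J] (κ : J → Cardinal) (A : Finset J) :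
    ↥(DD κ A) ≃ₜ (∀ i : A, (κ i).ord.ToType) × (∀ j : {j // j ∉ A}, Alpha (κ j)) where
  toFun x := (fun i => OnePoint.ofNeInfty (x.2 i i.2), fun j => x.1 j)
  invFun p := ⟨combineBC κ A p.2 p.1, fun i hi => by simp [combineBC, hi]⟩
  left_inv x := by
    refine Subtype.ext (funext fun i => ?_)
    by_cases hi : i ∈ A <;> simp [combineBC, hi]
  right_inv p := by
    ext i
    · simp [combineBC]
    · simp [combineBC, i.2]
  continuous_toFun := by
    refine .prodMk (continuous_pi fun i => continuous_discrete_rng.2 fun e => ?_)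
      (continuous_pi fun j => (continuous_apply (j : J)).comp continuous_subtype_val)
    have hfiber : (fun x : ↥(DD κ A) => OnePoint.ofNeInfty (x.2 i i.2)) ⁻¹' {e} =
        (fun x : ↥(DD κ A) => x.1 i) ⁻¹' {(e : Alpha (κ i))} := by
      ext x
      simp [← OnePoint.coe_eq_coe (x := OnePoint.ofNeInfty _)]
    rw [hfiber]
    exact (OnePoint.isOpen_singleton_coe e).preimage
      ((continuous_apply _).comp continuous_subtype_val)
  continuous_invFun := by
    refine .subtype_mk (continuous_pi fun i => ?_) _
    by_cases hi : i ∈ A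
    · simp only [combineBC, hi, dif_pos]
      exact OnePoint.continuous_coe.comp ((continuous_apply _).comp continuous_fst)
    · simp only [combineBC, hi, dif_neg, not_false_eq_true]
      exact (continuous_apply _).comp continuous_snd

/-- If `A` and `Aᶜ` are nonempty, then `|C_A| = κ_{max Aᶜ} ^ κ_{max A}`. -/
theorem stmt3 (n : ℕ) (κ : Fin (n + 1) → Cardinal) (hmono : Monotone κ)
    (hinf : ∀ i, ℵ₀ ≤ κ i)
    (A : Finset (Fin (n + 1))) (hA : A.Nonempty) (hAc : Aᶜ.Nonempty) :
    #{f : ↥(DD κ A) → ZMod 2 // Continuous f} = κ (Aᶜ.max' hAc) ^ κ (A.max' hA) := by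
  have hmk (i : Fin (n + 1)) : #(κ i).ord.ToType = κ i := by rw [mk_toType, card_ord]
  have hne (i : Fin (n + 1)) : Nonempty (κ i).ord.ToType :=
    mk_ne_zero_iff.1 ((hmk i).trans_ne (aleph0_pos.trans_le (hinf i)).ne')
  have hK : #{g : (∀ j : {j // j ∉ A}, Alpha (κ j)) → ZMod 2 // Continuous g} =
      κ (Aᶜ.max' hAc) := by
    rw [mk_continuous_pi_onePoint (X := fun j : {j // j ∉ A} => (κ j).ord.ToType)
      ⟨_, Finset.mem_compl.1 (Aᶜ.max'_mem hAc)⟩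
      (fun j => by simpa only [hmk] using hmono (Aᶜ.le_max' _ (Finset.mem_compl.2 j.2)))
      (by simpa only [hmk] using hinf _), hmk]
  have hD : #(∀ i : A, (κ i).ord.ToType) = κ (A.max' hA) := by
    rw [mk_pi_eq_of_forall_le ⟨_, A.max'_mem hA⟩
      (fun i => by simpa only [hmk] using hmono (A.le_max' _ i.2))
      (by simpa only [hmk] using hinf _), hmk]
  rw [mk_congr ((ddHomeomorphProd κ A).subtypeContinuousCongr (ZMod 2)),
    mk_continuous_prod_of_discrete, hK, hD]

end
end

section
/- Let κ = ⟨κ₀ ≤ … ≤ κ_n⟩ be a weakly increasing tuple of infinite cardinals. Then the set of functions f : ∏_{i≤n} κᵢ → ℤ/2 with the property that, for every i ≤ n, f is the restriction to ∏_{i≤n} κᵢ of some continuous function D_{{i}} → ℤ/2, has cardinality at least 2^{κ₀}. -/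
set_option linter.unusedSectionVars false

open Cardinal Function OnePoint

noncomputable section

variable {ι : Type} [Fintype ι] [DecidableEq ι]

/-!
Monotonicity gives embeddings `κ₀ ↪ κᵢ`, hence a diagonal copy of `κ₀` in `∏ κᵢ`.
Any `h : κ₀ → ℤ/2`, put on the diagonal and extended by `0`, is continuous on every
`D_{{i}}`: diagonal points are isolated, and fixing the (isolated) `i`-th coordinate of a point
of `D_{{i}}` gives a neighbourhood containing at most one diagonal point. Distinct `h` give
distinct functions on `∏ κᵢ`.
-/

open Set Topology

lemma isLocallyConstant_of_isolated_of_locallyFinite_support {X M : Type*} [TopologicalSpace X]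
    [T1Space X] [Zero M] {f : X → M} (hiso : ∀ x ∈ support f, IsOpen {x})
    (hfin : ∀ x, ∃ U ∈ 𝓝 x, (U ∩ support f).Finite) : IsLocallyConstant f := by
  refine (IsLocallyConstant.iff_eventually_eq f).2 fun x => ?_
  by_cases hx : x ∈ support f
  · filter_upwards [(hiso x hx).mem_nhds rfl] with y hy
    rw [mem_singleton_iff.1 hy]
  · obtain ⟨U, hU, hUfin⟩ := hfin x
    have hx' : x ∉ U ∩ support f := fun h => hx h.2
    filter_upwards [hU, hUfin.isClosed.isOpen_compl.mem_nhds hx'] with y hyU hy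
    rw [notMem_support.1 hx, notMem_support.1 fun h => hy ⟨hyU, h⟩]

lemma OnePoint.isOpen_singleton_coe_s4 {X : Type*} [TopologicalSpace X] [DiscreteTopology X]
    (x : X) : IsOpen {(x : OnePoint X)} := by
  rw [← image_singleton, isOpen_image_coe]
  exact isOpen_discrete _

section Diagonal

variable {ι : Type} {κ : ι → Cardinal} {α : Type}

def diagonal (e : ∀ i, α ↪ (κ i).ord.ToType) (a : α) : ∀ i, Alpha (κ i) :=
  fun i => (e i a : Alpha (κ i))

variable (e : ∀ i, α ↪ (κ i).ord.ToType)

lemma diagonal_mem_DD (A : Finset ι) (a : α) : diagonal e a ∈ DD κ A :=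
  fun _ _ => coe_ne_infty _

lemma diagonal_injective [Nonempty ι] : Injective (diagonal e) := by
  obtain ⟨i⟩ := ‹Nonempty ι›
  exact fun a b hab => (e i).injective (coe_injective (congrFun hab i))

lemma isOpen_singleton_diagonal [Finite ι] (a : α) : IsOpen {diagonal e a} := by
  rw [← univ_pi_singleton]
  exact isOpen_set_pi finite_univ fun i _ => isOpen_singleton_coe_s4 _

lemma subsingleton_diagonal_fiber (i : ι) (b : Alpha (κ i)) :
    {x ∈ range (diagonal e) | x i = b}.Subsingleton := by
  rintro _ ⟨⟨a, rfl⟩, ha⟩ _ ⟨⟨a', rfl⟩, ha'⟩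
  rw [(e i).injective (coe_injective (ha.trans ha'.symm))]

lemma support_extend_diagonal_subset {M : Type*} [Zero M] (h : α → M) :
    support (extend (diagonal e) h 0) ⊆ range (diagonal e) := fun x hx => by
  by_contra hr
  exact hx (extend_apply' (f := diagonal e) h 0 x hr)

lemma continuous_extend_diagonal [Finite ι] {M : Type*} [TopologicalSpace M] [Zero M]
    (i : ι) (h : α → M) : Continuous fun x : DD κ {i} => extend (diagonal e) h 0 x.1 := by
  refine (isLocallyConstant_of_isolated_of_locallyFinite_support ?_ ?_).continuous
  · intro x hx
    obtain ⟨a, ha⟩ := support_extend_diagonal_subset e h hx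
    convert (isOpen_singleton_diagonal e a).preimage continuous_subtype_val
    ext y
    simp [ha, Subtype.ext_iff]
  · intro x
    obtain ⟨b, hb⟩ := ne_infty_iff_exists.1 (x.2 i (Finset.mem_singleton_self i))
    have hU : IsOpen {y : DD κ {i} | y.1 i = x.1 i} := by
      rw [← hb]
      exact (isOpen_singleton_coe_s4 b).preimage
        ((continuous_apply (A := fun j => Alpha (κ j)) i).comp continuous_subtype_val)
    refine ⟨_, hU.mem_nhds rfl, Subsingleton.finite ?_⟩
    refine ((subsingleton_diagonal_fiber e i (x.1 i)).preimage Subtype.val_injective).anti ?_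
    rintro y ⟨hyi, hy⟩
    exact ⟨support_extend_diagonal_subset e h hy, hyi⟩

end Diagonal

lemma mk_fun_le_mk_restrictions {ι : Type} [Fintype ι] [Nonempty ι]
    {κ : ι → Cardinal} {α : Type} (e : ∀ i, α ↪ (κ i).ord.ToType) :
    #(α → ZMod 2) ≤ #{f : ↥(DD κ Finset.univ) → ZMod 2 //
      ∀ i, ∃ g : ↥(DD κ {i}) → ZMod 2, Continuous g ∧
        f = res (Finset.subset_univ {i}) g} := by
  refine mk_le_of_injective (f := fun h => ⟨fun x => extend (diagonal e) h 0 x.1,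
    fun i => ⟨_, continuous_extend_diagonal e i h, rfl⟩⟩) fun h₁ h₂ heq => ?_
  funext a
  have := congrFun (congrArg Subtype.val heq) ⟨diagonal e a, diagonal_mem_DD e _ a⟩
  simpa [(diagonal_injective e).extend_apply] using this

theorem stmt4_general (n : ℕ) (κ : Fin (n + 1) → Cardinal) (hmono : Monotone κ) :
    2 ^ κ 0 ≤ #{f : ↥(DD κ Finset.univ) → ZMod 2 //
      ∀ i : Fin (n + 1), ∃ g : ↥(DD κ {i}) → ZMod 2, Continuous g ∧
        f = res (Finset.subset_univ {i}) g} := by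
  have e (i : Fin (n + 1)) : (κ 0).ord.ToType ↪ (κ i).ord.ToType :=
    ((le_def _ _).1 (by simpa using hmono (Fin.zero_le i))).some
  calc 2 ^ κ 0 = #((κ 0).ord.ToType → ZMod 2) := by simp
    _ ≤ _ := mk_fun_le_mk_restrictions e

/-- The set of functions `∏ κᵢ → ℤ/2` which, for every `i`, are restrictions of a continuous
function on `D_{{i}}`, has cardinality at least `2 ^ κ₀`. -/
theorem stmt4 (n : ℕ) (κ : Fin (n + 1) → Cardinal) (hmono : Monotone κ)
    (hinf : ∀ i, ℵ₀ ≤ κ i) :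
    2 ^ κ 0 ≤ #{f : ↥(DD κ Finset.univ) → ZMod 2 //
      ∀ i : Fin (n + 1), ∃ g : ↥(DD κ {i}) → ZMod 2, Continuous g ∧
        f = res (Finset.subset_univ {i}) g} :=
  stmt4_general n κ hmono

end
end

section
/- Let ⟨Y_i : i ≤ n⟩ be a k-Fubini partition of X(κ)⁻. Then for every A ⊆ {0,…,n} with |A| ≥ k+1 and every i ∉ A, one has D_A ∩ Y_i = D_{A∪{i}} ∩ Y_i. -/
set_option linter.unusedSectionVars false

open Cardinal Function OnePoint

noncomputable section

variable {ι : Type} [Fintype ι] [DecidableEq ι]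

lemma DD_insert (κ : ι → Cardinal) (A : Finset ι) (i : ι) :
    DD κ (insert i A) = {x | x i ≠ ∞} ∩ DD κ A := by
  ext x
  simp [DD]

lemma FF_subset_Xminus (κ : ι → Cardinal) {B : Finset ι} (hB : B.Nonempty) :
    FF κ B ⊆ Xminus κ := fun _ hx =>
  let ⟨b, hb⟩ := hB
  ⟨b, (hx b).2 hb⟩

lemma IsFubini.exists_mem_of_mem_FF {κ : ι → Cardinal} {k : ℕ} {Y : ι → Set (∀ i, Alpha (κ i))}
    (hY : IsFubini κ k Y) {B : Finset ι} (hB : k + 1 ≤ B.card) {x : ∀ i, Alpha (κ i)}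
    (hx : x ∈ FF κ B) : ∃ l ∈ B, x ∈ Y l := by
  have hxX : x ∈ Xminus κ := FF_subset_Xminus κ (Finset.card_pos.mp (by omega)) hx
  simpa using interior_subset ((hY.2.2 B hB).2 (show (⟨x, hxX⟩ : Xminus κ) ∈ _ from hx))

/-- If `x i = ∞`, then `x` lies on the facet `F_B` of its finite coordinates `B ⊇ A`, so it
belongs to some `Y_l` with `l ∈ B`; then `l ≠ i`, contradicting disjointness. -/
lemma IsFubini.ne_infty_of_mem {κ : ι → Cardinal} {k : ℕ} {Y : ι → Set (∀ i, Alpha (κ i))}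
    (hY : IsFubini κ k Y) {A : Finset ι} (hA : k + 1 ≤ A.card) {i : ι} {x : ∀ i, Alpha (κ i)}
    (hxA : x ∈ DD κ A) (hxY : x ∈ Y i) : x i ≠ ∞ := by
  classical
  intro hxi
  set B := Finset.univ.filter fun l => x l ≠ ∞
  have hAB : A ⊆ B := fun l hl => by simpa [B] using hxA l hl
  have hxB : x ∈ FF κ B := fun l => by simp [B]
  obtain ⟨l, hlB, hxl⟩ := hY.exists_mem_of_mem_FF (hA.trans (Finset.card_le_card hAB)) hxB
  have hli : l ≠ i := by
    rintro rfl
    exact (Finset.mem_filter.mp hlB).2 hxi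
  exact Set.disjoint_left.mp (hY.1 hli) hxl hxY

theorem stmt7_general (n k : ℕ) (κ : Fin (n + 1) → Cardinal)
    (Y : Fin (n + 1) → Set (∀ i, Alpha (κ i))) (hY : IsFubini κ k Y)
    (A : Finset (Fin (n + 1))) (hA : k + 1 ≤ A.card)
    (i : Fin (n + 1)) :
    DD κ A ∩ Y i = DD κ (insert i A) ∩ Y i := by
  ext x
  simp only [DD_insert, Set.mem_inter_iff, Set.mem_ofPred_eq]
  exact ⟨fun ⟨hxA, hxY⟩ => ⟨⟨hY.ne_infty_of_mem hA hxA hxY, hxA⟩, hxY⟩,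
    fun ⟨⟨_, hxA⟩, hxY⟩ => ⟨hxA, hxY⟩⟩

/-- For a `k`-Fubini partition `Y`, any `A` with `|A| ≥ k+1` and any `i ∉ A`:
`D_A ∩ Y_i = D_{A ∪ {i}} ∩ Y_i`. -/
theorem stmt7 (n k : ℕ) (κ : Fin (n + 1) → Cardinal) (hinf : ∀ i, ℵ₀ ≤ κ i)
    (Y : Fin (n + 1) → Set (∀ i, Alpha (κ i))) (hY : IsFubini κ k Y)
    (A : Finset (Fin (n + 1))) (hA : k + 1 ≤ A.card)
    (i : Fin (n + 1)) (hi : i ∉ A) :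
    DD κ A ∩ Y i = DD κ (insert i A) ∩ Y i :=
  stmt7_general n k κ Y hY A hA i

end
end

section
/- Let ⟨Y_i : i ≤ n⟩ be a k-Fubini partition of X(κ)⁻ and let f = ⟨f_A : A ⊆ {0,…,n}, |A| = k+2⟩ be a tuple with f_A ∈ C_A for each A. For each B ⊆ {0,…,n} with |B| = k+1, define g_B : D_B → ℤ/2 by: for x ∈ D_B ∩ Y_i, g_B(x) = f_{B∪{i}}(x) if i ∉ B, and g_B(x) = 0 if i ∈ B. Then each g_B is continuous, i.e., g_B ∈ C_B. Moreover, if f is a (k+1)-cocycle, then dg = f, where g = ⟨g_B⟩. -/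
set_option linter.unusedSectionVars false

open Cardinal Function OnePoint

noncomputable section

variable {ι : Type} [Fintype ι] [DecidableEq ι]

/-
Every point of `D_B`, `|B| ≥ k + 1`, lies in a piece `Y_j` with `x_j ≠ ∞`: the facet of `x` is
covered by the pieces indexed by its finite coordinates. So on `D_B ∩ Y_j` with `j ∉ B` the
function `g_B` is the restriction of the continuous `f_{B ∪ {j}}`, and on the rest of `D_B`, which
is open because the finitely many `D_B ∩ Y_j`, `j ∉ B`, are clopen, it vanishes. For `dg = f` at
`x ∈ D_A ∩ Y_j`: if `j ∈ A` only the term `g_{A ∖ {j}}(x) = f_A(x)` survives; if `j ∉ A` then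
`(dg)_A(x) = ∑_{i ∈ A} f_{(A ∪ {j}) ∖ {i}}(x)`, which is `f_A(x)` by the cocycle identity at
`A ∪ {j}`.
-/

section Fubini

variable {κ : ι → Cardinal} {k : ℕ} {Y : ι → Set (∀ i, Alpha (κ i))}

lemma mem_Xminus_of_mem_DD {B : Finset ι} (hB : B.Nonempty) {x : ∀ i, Alpha (κ i)}
    (hx : x ∈ DD κ B) : x ∈ Xminus κ :=
  let ⟨i, hi⟩ := hB
  ⟨i, hx i hi⟩

lemma mem_DD_insert {B : Finset ι} {x : ∀ i, Alpha (κ i)} (hx : x ∈ DD κ B) {j : ι}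
    (hj : x j ≠ ∞) : x ∈ DD κ (insert j B) := by
  intro i hi
  rcases Finset.mem_insert.1 hi with rfl | hi
  exacts [hj, hx i hi]

lemma Cochain.congr_finset (f : Cochain κ) {A B : Finset ι} (h : A = B) (x : ∀ i, Alpha (κ i))
    (hA : x ∈ DD κ A) (hB : x ∈ DD κ B) : f A ⟨x, hA⟩ = f B ⟨x, hB⟩ := by
  subst h
  rfl

namespace IsFubini

lemma exists_mem (hY : IsFubini κ k Y) {x : ∀ i, Alpha (κ i)} (hx : x ∈ Xminus κ) :
    ∃ j, x ∈ Y j :=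
  Set.mem_iUnion.1 (hY.2.1 ▸ hx)

lemma eq_of_mem (hY : IsFubini κ k Y) {x : ∀ i, Alpha (κ i)} {i j : ι}
    (hi : x ∈ Y i) (hj : x ∈ Y j) : i = j := by
  by_contra h
  exact Set.disjoint_left.mp (hY.1 h) hi hj

lemma ne_infty_of_mem_s8 (hY : IsFubini κ k Y) {B : Finset ι} (hB : k + 1 ≤ B.card)
    {x : ∀ i, Alpha (κ i)} (hx : x ∈ DD κ B) {j : ι} (hj : x ∈ Y j) : x j ≠ ∞ := by
  classical
  let A : Finset ι := {i | x i ≠ ∞}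
  have hBA : B ⊆ A := fun i hi => Finset.mem_filter.2 ⟨Finset.mem_univ _, hx i hi⟩
  have hxX : x ∈ Xminus κ :=
    mem_Xminus_of_mem_DD (Finset.card_pos.1 (by omega)) hx
  have hxF : (⟨x, hxX⟩ : ↥(Xminus κ)) ∈ {y : ↥(Xminus κ) | y.1 ∈ FF κ A} :=
    fun i => by simp [A]
  have hxA : x ∈ ⋃ i ∈ A, Y i := interior_subset (s := Subtype.val ⁻¹' _)
    ((hY.2.2 A (hB.trans (Finset.card_le_card hBA))).2 hxF)
  obtain ⟨i, hiA, hi⟩ := Set.mem_iUnion₂.1 hxA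
  obtain rfl := hY.eq_of_mem hi hj
  exact (Finset.mem_filter.1 hiA).2

lemma mem_DD_insert_of_mem (hY : IsFubini κ k Y) {B : Finset ι} (hB : k + 1 ≤ B.card)
    {x : ∀ i, Alpha (κ i)} (hx : x ∈ DD κ B) {j : ι} (hj : x ∈ Y j) :
    x ∈ DD κ (insert j B) :=
  mem_DD_insert hx (hY.ne_infty_of_mem_s8 hB hx hj)

lemma isOpen_compl_biUnion (hY : IsFubini κ k Y) {B : Finset ι} (hB : k + 1 ≤ B.card) :
    IsOpen (⋃ i ∈ {i | i ∉ B}, (Subtype.val : ↥(DD κ B) → _) ⁻¹' Y i)ᶜ :=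
  (Set.toFinite _).isClosed_biUnion (fun i hi => ((hY.2.2 B hB).1 i hi).1) |>.isOpen_compl

end IsFubini

def IsPiecewiseLift (k : ℕ) (Y : ι → Set (∀ i, Alpha (κ i))) (f g : Cochain κ) : Prop :=
  ∀ B : Finset ι, B.card = k + 1 →
    ∀ (x : ↥(DD κ B)) (i : ι), (x : ∀ j, Alpha (κ j)) ∈ Y i →
      (i ∈ B → g B x = 0) ∧
      (i ∉ B → ∀ hx : (x : ∀ j, Alpha (κ j)) ∈ DD κ (insert i B),
        g B x = f (insert i B) ⟨(x : ∀ j, Alpha (κ j)), hx⟩)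

namespace IsPiecewiseLift

variable {f g : Cochain κ}

lemma eqOn_zero (hY : IsFubini κ k Y) (hg : IsPiecewiseLift k Y f g) {B : Finset ι}
    (hB : B.card = k + 1) :
    Set.EqOn (g B) 0 (⋃ i ∈ {i | i ∉ B}, (Subtype.val : ↥(DD κ B) → _) ⁻¹' Y i)ᶜ := by
  intro x hx
  obtain ⟨j, hj⟩ := hY.exists_mem (mem_Xminus_of_mem_DD (Finset.card_pos.1 (by omega)) x.2)
  have hjB : j ∈ B := by
    by_contra hjB
    exact hx (Set.mem_biUnion hjB hj)
  exact (hg B hB x j hj).1 hjB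

lemma continuousOn (hY : IsFubini κ k Y) (hf : IsCochain κ (k + 1) f)
    (hg : IsPiecewiseLift k Y f g) {B : Finset ι} (hB : B.card = k + 1) {j : ι} (hjB : j ∉ B) :
    ContinuousOn (g B) ((Subtype.val : ↥(DD κ B) → _) ⁻¹' Y j) := by
  let incl : ↥((Subtype.val : ↥(DD κ B) → _) ⁻¹' Y j) → ↥(DD κ (insert j B)) :=
    fun x => ⟨x.1.1, hY.mem_DD_insert_of_mem hB.ge x.1.2 x.2⟩
  have hincl : Continuous incl := by fun_prop
  have hcard : (insert j B).card = k + 1 + 1 := by rw [Finset.card_insert_of_notMem hjB, hB]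
  refine continuousOn_iff_continuous_domRestrict.2 ?_
  convert (hf _ hcard).comp hincl using 1
  funext x
  exact (hg B hB x.1 j x.2).2 hjB _

theorem isCochain (hY : IsFubini κ k Y) (hf : IsCochain κ (k + 1) f)
    (hg : IsPiecewiseLift k Y f g) : IsCochain κ k g := by
  intro B hB
  refine continuous_iff_continuousAt.2 fun x => ?_
  obtain ⟨j, hj⟩ := hY.exists_mem (mem_Xminus_of_mem_DD (Finset.card_pos.1 (by omega)) x.2)
  by_cases hjB : j ∈ B
  · have hx : x ∈ (⋃ i ∈ {i | i ∉ B}, (Subtype.val : ↥(DD κ B) → _) ⁻¹' Y i)ᶜ := by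
      simp only [Set.mem_compl_iff, Set.mem_iUnion, not_exists]
      rintro i hiB hi
      exact hiB (hY.eq_of_mem hi hj ▸ hjB)
    exact (continuousOn_const.congr (hg.eqOn_zero hY hB)).continuousAt
      ((hY.isOpen_compl_biUnion hB.ge).mem_nhds hx)
  · exact (hg.continuousOn hY hf hB hjB).continuousAt
      ((((hY.2.2 B hB.ge).1 j hjB).isOpen).mem_nhds hj)

lemma cb_eq_of_mem (hg : IsPiecewiseLift k Y f g) {A : Finset ι}
    (hA : A.card = k + 2) (x : ↥(DD κ A)) {j : ι} (hj : x.1 ∈ Y j) (hjA : j ∈ A) :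
    cb κ g A x = f A x := by
  have hcard (i) (hi : i ∈ A) : (A.erase i).card = k + 1 := by
    rw [Finset.card_erase_of_mem hi, hA]; rfl
  simp only [cb, res]
  rw [Finset.sum_eq_single_of_mem j hjA fun i hiA hij =>
    (hg (A.erase i) (hcard i hiA) _ j hj).1 (Finset.mem_erase.2 ⟨Ne.symm hij, hjA⟩)]
  rw [(hg (A.erase j) (hcard j hjA) _ j hj).2 (Finset.notMem_erase j A)
    (by rw [Finset.insert_erase hjA]; exact x.2)]
  exact f.congr_finset (Finset.insert_erase hjA) _ _ _

lemma cb_insert_eq_of_not_mem (hY : IsFubini κ k Y) (hg : IsPiecewiseLift k Y f g)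
    {A : Finset ι} (hA : A.card = k + 2) (x : ↥(DD κ A)) {j : ι} (hj : x.1 ∈ Y j)
    (hjA : j ∉ A) :
    cb κ f (insert j A) ⟨x, hY.mem_DD_insert_of_mem (by omega) x.2 hj⟩ = f A x + cb κ g A x := by
  have hxj : x.1 j ≠ ∞ := hY.ne_infty_of_mem_s8 (by omega) x.2 hj
  simp only [cb, res]
  rw [Finset.sum_insert hjA]
  congr 1
  · exact f.congr_finset (Finset.erase_insert hjA) _ _ _
  refine Finset.sum_congr rfl fun i hiA => ?_
  have hij : i ≠ j := fun h => hjA (h ▸ hiA)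
  have hcard : (A.erase i).card = k + 1 := by rw [Finset.card_erase_of_mem hiA, hA]; rfl
  have hx : x.1 ∈ DD κ (insert j (A.erase i)) :=
    mem_DD_insert (fun i' hi' => x.2 i' (Finset.mem_of_mem_erase hi')) hxj
  rw [(hg (A.erase i) hcard _ j hj).2 (fun h => hjA (Finset.mem_of_mem_erase h)) hx]
  exact f.congr_finset (Finset.erase_insert_of_ne hij.symm) _ _ _

theorem cb_eq (hY : IsFubini κ k Y) (hg : IsPiecewiseLift k Y f g)
    (hcoc : ∀ A : Finset ι, A.card = k + 3 → ∀ x, cb κ f A x = 0) {A : Finset ι}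
    (hA : A.card = k + 2) (x : ↥(DD κ A)) : f A x = cb κ g A x := by
  obtain ⟨j, hj⟩ := hY.exists_mem (mem_Xminus_of_mem_DD (Finset.card_pos.1 (by omega)) x.2)
  by_cases hjA : j ∈ A
  · exact (hg.cb_eq_of_mem hA x hj hjA).symm
  · have hcard : (insert j A).card = k + 3 := by rw [Finset.card_insert_of_notMem hjA, hA]
    rw [← CharTwo.add_eq_zero, ← hg.cb_insert_eq_of_not_mem hY hA x hj hjA]
    exact hcoc _ hcard _

end IsPiecewiseLift

end Fubini

theorem stmt8_general (n k : ℕ) (κ : Fin (n + 1) → Cardinal)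
    (Y : Fin (n + 1) → Set (∀ i, Alpha (κ i))) (hY : IsFubini κ k Y)
    (f : Cochain κ) (hf : IsCochain κ (k + 1) f)
    (g : Cochain κ)
    (hg : ∀ B : Finset (Fin (n + 1)), B.card = k + 1 →
      ∀ (x : ↥(DD κ B)) (i : Fin (n + 1)), (x : ∀ j, Alpha (κ j)) ∈ Y i →
        (i ∈ B → g B x = 0) ∧
        (i ∉ B → ∀ hx : (x : ∀ j, Alpha (κ j)) ∈ DD κ (insert i B),
          g B x = f (insert i B) ⟨(x : ∀ j, Alpha (κ j)), hx⟩)) :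
    IsCochain κ k g ∧
    ((∀ A : Finset (Fin (n + 1)), A.card = k + 3 → ∀ x, cb κ f A x = 0) →
      ∀ A : Finset (Fin (n + 1)), A.card = k + 2 → ∀ x, f A x = cb κ g A x) :=
  ⟨IsPiecewiseLift.isCochain hY hf hg, fun hcoc _ hA x => IsPiecewiseLift.cb_eq hY hg hcoc hA x⟩

/-- Given a `k`-Fubini partition `Y` and a tuple `f` of continuous functions over sets of size
`k+2`, the piecewise-defined `g` is a continuous cochain, and if `f` is a cocycle then `dg = f`. -/
theorem stmt8 (n k : ℕ) (κ : Fin (n + 1) → Cardinal) (hinf : ∀ i, ℵ₀ ≤ κ i)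
    (Y : Fin (n + 1) → Set (∀ i, Alpha (κ i))) (hY : IsFubini κ k Y)
    (f : Cochain κ) (hf : IsCochain κ (k + 1) f)
    (g : Cochain κ)
    (hg : ∀ B : Finset (Fin (n + 1)), B.card = k + 1 →
      ∀ (x : ↥(DD κ B)) (i : Fin (n + 1)), (x : ∀ j, Alpha (κ j)) ∈ Y i →
        (i ∈ B → g B x = 0) ∧
        (i ∉ B → ∀ hx : (x : ∀ j, Alpha (κ j)) ∈ DD κ (insert i B),
          g B x = f (insert i B) ⟨(x : ∀ j, Alpha (κ j)), hx⟩)) :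
    IsCochain κ k g ∧
    ((∀ A : Finset (Fin (n + 1)), A.card = k + 3 → ∀ x, cb κ f A x = 0) →
      ∀ A : Finset (Fin (n + 1)), A.card = k + 2 → ∀ x, f A x = cb κ g A x) :=
  stmt8_general n k κ Y hY f hf g hg

end
end

section
/- Let κ = ⟨κ₀ ≤ … ≤ κ_n⟩ be a weakly increasing tuple of infinite cardinals and suppose there exists i₀ ≤ n with κ_{i₀} < ℵ_{i₀}. Then X(κ)⁻ admits an (n−1)-Fubini partition; equivalently, the product ∏_{i≤n} κᵢ can be partitioned into sets Y₀,…,Y_n such that for each j ≤ n and each choice of values x_i ∈ κ_i for all i ≠ j, only finitely many x_j ∈ κ_j yield a tuple lying in Y_j. -/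
set_option linter.unusedSectionVars false

open Cardinal Function OnePoint

/-!
Call a cover `Z` of `∏ᵢ αᵢ` line-finite if each `Z j` meets every line in direction `j` in a
finite set. Kuratowski's free-set argument gives such a cover of `ι → O` whenever `#O < ℵ_k` and
`ι` has at least `k + 1` elements, by induction on `k`: for finite `O` take `Z j = univ`; otherwise
well-order `O` in type `ω_k`, and cover a point `y` via a coordinate `js` where it is largest, using
a cover of the other coordinates, which lie in the initial segment `Iic (y js)` of size `< ℵ_k`.
As `κ` is monotone and `κ_{i₀} < ℵ_{i₀}`, the first `i₀ + 1` coordinates carry such a cover, and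
disjointifying it gives `Z`.

The Fubini partition sorts the points with all coordinates finite according to `Z`, the others by
some finite coordinate. The Fubini conditions only concern points with at most one infinite
coordinate `j`; since the neighbourhoods of `∞` in `α(κⱼ)` are cofinite, line-finiteness of `Z j`
gives such a point a neighbourhood missing `Y j`.
-/

universe u

section FiniteLineCover

variable {ι : Type*} [DecidableEq ι]

def IsFiniteInDirection {α : ι → Type*} (S : Set (∀ i, α i)) (j : ι) : Prop :=
  ∀ x, {v | update x j v ∈ S}.Finite

theorem IsFiniteInDirection.mono {α : ι → Type*} {S T : Set (∀ i, α i)} {j : ι}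
    (hT : IsFiniteInDirection T j) (hST : S ⊆ T) : IsFiniteInDirection S j :=
  fun x => (hT x).subset fun _ hv => hST hv

def HasFiniteLineCover (α : ι → Type*) : Prop :=
  ∃ Z : ι → Set (∀ i, α i), ⋃ j, Z j = Set.univ ∧ ∀ j, IsFiniteInDirection (Z j) j

theorem HasFiniteLineCover.of_embedding {α β : ι → Type*} (u : ∀ i, α i ↪ β i)
    (h : HasFiniteLineCover β) : HasFiniteLineCover α := by
  obtain ⟨Z, hcover, hfin⟩ := h
  let U : (∀ i, α i) → ∀ i, β i := fun x i => u i (x i)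
  refine ⟨fun j => U ⁻¹' Z j, ?_, fun j x => ?_⟩
  · rw [← Set.preimage_iUnion, hcover, Set.preimage_univ]
  · have hU : ∀ v, U (update x j v) = update (U x) j (u j v) := fun v =>
      funext <| apply_update (fun i => u i) x j v
    refine ((hfin j (U x)).preimage (u j).injective.injOn).subset fun v hv => ?_
    simpa [hU] using hv

theorem HasFiniteLineCover.of_comp {ι' : Type*} [DecidableEq ι'] {e : ι' → ι}
    (he : Injective e) {α : ι → Type*} (h : HasFiniteLineCover fun i' => α (e i')) :
    HasFiniteLineCover α := by
  obtain ⟨Z, hcover, hfin⟩ := h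
  let W : ι' → Set (∀ i, α i) := fun i' => (fun x i'' => x (e i'')) ⁻¹' Z i'
  refine ⟨extend e W fun _ => ∅, ?_, fun j x => ?_⟩
  · refine Set.eq_univ_of_forall fun x => ?_
    obtain ⟨i', hi'⟩ := Set.mem_iUnion.1 (hcover.symm ▸ Set.mem_univ fun i'' => x (e i''))
    exact Set.mem_iUnion.2 ⟨e i', by rwa [he.extend_apply]⟩
  · by_cases hj : ∃ i', e i' = j
    · obtain ⟨i', rfl⟩ := hj
      refine (hfin i' fun i'' => x (e i'')).subset fun v hv => ?_
      simpa [W, he.extend_apply, update_comp_eq_of_injective' x he] using hv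
    · simp [extend_apply' _ _ _ hj]

theorem HasFiniteLineCover.of_segments [Finite ι] [Nonempty ι] {O : Type*} [LinearOrder O]
    (hseg : ∀ (js : ι) (o : O), HasFiniteLineCover fun _ : {i // i ≠ js} => Set.Iic o) :
    HasFiniteLineCover fun _ : ι => O := by
  choose Z hcover hfin using hseg
  refine ⟨fun j => {y | ∃ js, ∃ h : j ≠ js, (∀ i, y i ≤ y js) ∧
      (fun i : {i // i ≠ js} => Set.projIic (y js) (y i)) ∈ Z js (y js) ⟨j, h⟩},
    ?_, fun j x => ?_⟩
  · refine Set.eq_univ_of_forall fun y => ?_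
    obtain ⟨js, hjs⟩ := Finite.exists_max y
    obtain ⟨j', hj'⟩ := Set.mem_iUnion.1 <|
      (hcover js (y js)).symm ▸ Set.mem_univ fun i : {i // i ≠ js} => Set.projIic (y js) (y i)
    exact Set.mem_iUnion.2 ⟨j', js, j'.2, hjs, hj'⟩
  · refine (Set.finite_iUnion fun js => Set.finite_iUnion fun h : j ≠ js =>
      (hfin js (x js) ⟨j, h⟩ fun i => Set.projIic (x js) (x i)).image Subtype.val).subset ?_
    rintro v ⟨js, h, hmax, hmem⟩
    rw [update_of_ne h.symm] at hmax hmem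
    have hv : v ≤ x js := by simpa using hmax j
    have hproj : Set.projIic (x js) v = ⟨v, hv⟩ := Subtype.ext (min_eq_right hv)
    have hrestrict : (fun i : {i // i ≠ js} => Set.projIic (x js) (update x j v i)) =
        update (fun i : {i // i ≠ js} => Set.projIic (x js) (x i)) ⟨j, h⟩ ⟨v, hv⟩ := by
      rw [← hproj, ← update_comp_eq_of_injective' (fun i => Set.projIic (x js) (x i))
        Subtype.val_injective ⟨j, h⟩]
      exact funext fun i => apply_update (fun _ => Set.projIic (x js)) x j v i
    refine Set.mem_iUnion₂.2 ⟨js, h, ⟨v, hv⟩, ?_, rfl⟩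
    rwa [hrestrict] at hmem

theorem hasFiniteLineCover_of_mk_lt_aleph [Fintype ι] {O : Type u} (k : ℕ)
    (hι : k + 1 ≤ Fintype.card ι) (hO : #O < ℵ_ k) : HasFiniteLineCover fun _ : ι => O := by
  induction k generalizing ι O with
  | zero =>
    have : Nonempty ι := Fintype.card_pos_iff.1 (by omega)
    have : Finite O := Cardinal.mk_lt_aleph0_iff.1 (by simpa using hO)
    exact ⟨fun _ => Set.univ, Set.iUnion_const _, fun _ _ => Set.toFinite _⟩
  | succ k ih =>
    have : Nonempty ι := Fintype.card_pos_iff.1 (by omega)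
    let W := (ℵ_ k : Cardinal.{u}).ord.ToType
    have hW : #W = ℵ_ k := by simp [W]
    obtain ⟨e⟩ : Nonempty (O ↪ W) := by
      rw [← Cardinal.le_def, hW, ← Order.lt_succ_iff, succ_aleph]
      simpa using hO
    refine .of_embedding (fun _ => e) (.of_segments fun js o => ih ?_ ?_)
    · simp only [ne_eq, Fintype.card_subtype_compl, Fintype.card_unique]
      omega
    · exact (Cardinal.mk_Iic_lt o (by simp [W]) (hW ▸ aleph0_le_aleph k)).trans_eq hW

theorem hasFiniteLineCover_toType_of_lt_aleph {n : ℕ} {κ : Fin (n + 1) → Cardinal}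
    (hmono : Monotone κ) {i₀ : Fin (n + 1)} (hi₀ : κ i₀ < ℵ_ (i₀ : ℕ)) :
    HasFiniteLineCover fun i => (κ i).ord.ToType := by
  have hle : (i₀ : ℕ) + 1 ≤ n + 1 := i₀.2
  have hembed (i : Fin (i₀ + 1)) :
      Nonempty ((κ (Fin.castLE hle i)).ord.ToType ↪ (κ i₀).ord.ToType) := by
    rw [← Cardinal.le_def]
    simpa using hmono (Fin.le_iff_val_le_val.2 (Nat.lt_succ_iff.1 i.2))
  exact .of_comp (Fin.castLE_injective hle) <| .of_embedding (fun i => (hembed i).some) <|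
    hasFiniteLineCover_of_mk_lt_aleph (i₀ : ℕ) (by simp) (by simpa using hi₀)

end FiniteLineCover

section OnePointProduct

variable {ι : Type*} {α : ι → Type*}

def coePi (y : ∀ i, α i) : ∀ i, OnePoint (α i) := fun i => y i

theorem coePi_injective : Injective (coePi (α := α)) :=
  fun _ _ h => funext fun i => coe_injective (congr_fun h i)

theorem exists_coePi_eq {x : ∀ i, OnePoint (α i)} (hx : ∀ i, x i ≠ ∞) :
    ∃ y, coePi y = x := by
  choose y hy using fun i => ne_infty_iff_exists.1 (hx i)
  exact ⟨y, funext hy⟩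

variable [DecidableEq ι]

theorem update_coePi (y : ∀ i, α i) (j : ι) (v : α j) :
    update (coePi y) j (v : OnePoint (α j)) = coePi (update y j v) :=
  (funext <| apply_update (fun i (a : α i) => (a : OnePoint (α i))) y j v).symm

/-- A point with an infinite coordinate goes to the piece of an arbitrarily chosen finite
coordinate. -/
def onePointPartition (Z : ι → Set (∀ i, α i)) (j : ι) : Set (∀ i, OnePoint (α i)) :=
  coePi '' Z j ∪ {x | (∃ i, x i = ∞) ∧ ∃ h : ∃ i, x i ≠ ∞, h.choose = j}

variable {Z : ι → Set (∀ i, α i)}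

theorem coePi_mem_onePointPartition {y : ∀ i, α i} {j : ι} :
    coePi y ∈ onePointPartition Z j ↔ y ∈ Z j := by
  simp [onePointPartition, coePi_injective.mem_set_image, coePi]

theorem ne_infty_of_mem_onePointPartition {x : ∀ i, OnePoint (α i)} {j : ι}
    (hx : x ∈ onePointPartition Z j) : x j ≠ ∞ := by
  rcases hx with ⟨y, -, rfl⟩ | ⟨-, h, rfl⟩
  · exact coe_ne_infty _
  · exact h.choose_spec

theorem pairwise_disjoint_onePointPartition (hZ : Pairwise (Disjoint on Z)) :
    Pairwise (Disjoint on onePointPartition Z) := by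
  intro a b hab
  refine Set.disjoint_left.2 fun x hxa hxb => ?_
  rcases hxa with ⟨y, hya, rfl⟩ | ⟨⟨i, hi⟩, h, rfl⟩
  · exact Set.disjoint_left.1 (hZ hab) hya (coePi_mem_onePointPartition.1 hxb)
  · rcases hxb with ⟨y, -, rfl⟩ | ⟨_, _, hb⟩
    · exact coe_ne_infty _ hi
    · exact hab hb

theorem iUnion_onePointPartition (hZ : ⋃ j, Z j = Set.univ) :
    ⋃ j, onePointPartition Z j = {x | ∃ i, x i ≠ ∞} := by
  refine Set.Subset.antisymm
    (Set.iUnion_subset fun j x hx => ⟨j, ne_infty_of_mem_onePointPartition hx⟩) fun x hx => ?_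
  by_cases hinf : ∃ i, x i = ∞
  · exact Set.mem_iUnion.2 ⟨_, Or.inr ⟨hinf, hx, rfl⟩⟩
  · obtain ⟨y, rfl⟩ := exists_coePi_eq (not_exists.1 hinf)
    obtain ⟨j, hj⟩ := Set.mem_iUnion.1 (hZ.symm ▸ Set.mem_univ y)
    exact Set.mem_iUnion.2 ⟨j, coePi_mem_onePointPartition.2 hj⟩

theorem finite_setOf_update_mem_onePointPartition {j : ι} (hZ : IsFiniteInDirection (Z j) j)
    {q : ∀ i, OnePoint (α i)} (hq : ∀ i ≠ j, q i ≠ ∞) :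
    {v : α j | update q j (v : OnePoint (α j)) ∈ onePointPartition Z j}.Finite := by
  rcases Set.eq_empty_or_nonempty {v : α j | update q j ↑v ∈ onePointPartition Z j} with
    h | ⟨v₀, -⟩
  · exact h ▸ Set.finite_empty
  obtain ⟨y, hy⟩ : ∃ y, coePi y = update q j ↑v₀ :=
    exists_coePi_eq fun i => by
      by_cases hi : i = j
      · subst hi; simp
      · simpa [hi] using hq i hi
  refine (hZ y).subset fun v hv => ?_
  have h : update q j (v : OnePoint (α j)) = coePi (update y j v) := by
    rw [← update_coePi, hy, update_idem]
  exact coePi_mem_onePointPartition.1 (h ▸ hv)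

end OnePointProduct

section Topology

variable {ι : Type*} [Finite ι] {α : ι → Type*} [∀ i, TopologicalSpace (α i)]
  [∀ i, DiscreteTopology (α i)]

theorem isOpen_singleton_of_ne_infty {X : Type*} [TopologicalSpace X] [DiscreteTopology X]
    {a : OnePoint X} (ha : a ≠ ∞) : IsOpen {a} := by
  obtain ⟨b, rfl⟩ := ne_infty_iff_exists.1 ha
  simpa using isOpenMap_coe {b} (isOpen_discrete _)

theorem isOpen_singleton_of_forall_ne_infty {x : ∀ i, OnePoint (α i)} (hx : ∀ i, x i ≠ ∞) :
    IsOpen {x} := by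
  rw [← Set.univ_pi_singleton]
  exact isOpen_set_pi Set.finite_univ fun i _ => isOpen_singleton_of_ne_infty (hx i)

theorem exists_isOpen_mem_disjoint [DecidableEq ι] {S : Set (∀ i, OnePoint (α i))} {j : ι}
    (hS : ∀ x ∈ S, x j ≠ ∞) {q : ∀ i, OnePoint (α i)} (hq : ∀ i ≠ j, q i ≠ ∞) (hqj : q j = ∞)
    (hline : {v : α j | update q j (v : OnePoint (α j)) ∈ S}.Finite) :
    ∃ U, IsOpen U ∧ q ∈ U ∧ Disjoint U S := by
  refine ⟨{x | (∀ i ≠ j, x i = q i) ∧ x j ∉ (↑) '' {v : α j | update q j ↑v ∈ S}}, ?_,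
    ⟨fun _ _ => rfl, by simp [hqj]⟩, Set.disjoint_left.2 ?_⟩
  · simp only [Set.ofPred_and, Set.ofPred_forall]
    exact (isOpen_iInter_of_finite fun i => isOpen_iInter_of_finite fun hi =>
      (isOpen_singleton_of_ne_infty (hq i hi)).preimage (continuous_apply i)).inter
      ((isOpen_compl_image_coe.2 ⟨isClosed_discrete _, hline.isCompact⟩).preimage
        (continuous_apply j))
  · rintro x ⟨hxq, hxS⟩ hx
    obtain ⟨v, hv⟩ := ne_infty_iff_exists.1 (hS x hx)
    obtain rfl : x = update q j ↑v := eq_update_iff.2 ⟨hv.symm, hxq⟩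
    exact hxS ⟨v, hx, (update_self j _ q).symm⟩

end Topology

theorem Finset.eq_univ_or_eq_univ_erase_of_card_le {ι : Type*} [Fintype ι] [DecidableEq ι]
    {A : Finset ι} (hA : Fintype.card ι ≤ A.card + 1) :
    A = Finset.univ ∨ ∃ j, A = Finset.univ.erase j := by
  have hAc : Aᶜ.card ≤ 1 := by rw [Finset.card_compl]; omega
  rcases Nat.le_one_iff_eq_zero_or_eq_one.1 hAc with h | h
  · exact .inl (Finset.compl_eq_empty_iff A |>.1 (Finset.card_eq_zero.1 h))
  · obtain ⟨j, hj⟩ := Finset.card_eq_one.1 h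
    exact .inr ⟨j, by rw [← compl_compl A, hj, Finset.compl_singleton]⟩

theorem isClopen_of_forall_exists_isOpen {X : Type*} [TopologicalSpace X] {s : Set X}
    (h : ∀ x, ∃ U, IsOpen U ∧ x ∈ U ∧ ∀ y ∈ U, (y ∈ s ↔ x ∈ s)) : IsClopen s := by
  have hs : IsLocallyConstant (· ∈ s) := (IsLocallyConstant.iff_exists_open _).2 fun x => by
    obtain ⟨U, hU, hxU, hUs⟩ := h x
    exact ⟨U, hU, hxU, fun y hy => propext (hUs y hy)⟩
  simpa using hs.isClopen_fiber True

section Fubini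

variable {ι : Type} [Fintype ι] [DecidableEq ι] {κ : ι → Cardinal}

theorem isClopen_preimage_val_DD_erase {S : Set (∀ i, Alpha (κ i))} {j : ι}
    (hS : ∀ x ∈ S, x j ≠ ∞)
    (hline : ∀ q : ∀ i, Alpha (κ i), (∀ i ≠ j, q i ≠ ∞) →
      {v : (κ j).ord.ToType | update q j (v : Alpha (κ j)) ∈ S}.Finite) :
    IsClopen ((Subtype.val : DD κ (Finset.univ.erase j) → _) ⁻¹' S) := by
  refine isClopen_of_forall_exists_isOpen fun x => ?_
  have hx : ∀ i ≠ j, x.1 i ≠ ∞ := fun i hi => x.2 i (by simpa using hi)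
  by_cases hxj : x.1 j = ∞
  · obtain ⟨U, hU, hxU, hUS⟩ := exists_isOpen_mem_disjoint hS hx hxj (hline _ hx)
    exact ⟨_, hU.preimage continuous_subtype_val, hxU, fun y hy =>
      iff_of_false (Set.disjoint_left.1 hUS hy) (Set.disjoint_left.1 hUS hxU)⟩
  · have hx' : ∀ i, x.1 i ≠ ∞ := fun i => by
      by_cases hi : i = j
      · exact hi ▸ hxj
      · exact hx i hi
    refine ⟨_, (isOpen_singleton_of_forall_ne_infty hx').preimage continuous_subtype_val, rfl,
      fun y hy => ?_⟩
    rw [Subtype.ext hy]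

theorem setOf_mem_FF_erase_subset_interior {Y : ι → Set (∀ i, Alpha (κ i))}
    (hunion : ⋃ i, Y i = Xminus κ) {j : ι} (hY : ∀ x ∈ Y j, x j ≠ ∞)
    (hline : ∀ q : ∀ i, Alpha (κ i), (∀ i ≠ j, q i ≠ ∞) →
      {v : (κ j).ord.ToType | update q j (v : Alpha (κ j)) ∈ Y j}.Finite) :
    {x : Xminus κ | x.1 ∈ FF κ (Finset.univ.erase j)} ⊆
      interior ((Subtype.val : Xminus κ → _) ⁻¹' ⋃ i ∈ Finset.univ.erase j, Y i) := by
  intro q hq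
  have hqj : q.1 j = ∞ := by
    by_contra h
    simpa using (hq j).1 h
  have hq' : ∀ i ≠ j, q.1 i ≠ ∞ := fun i hi => (hq i).2 (by simpa using hi)
  obtain ⟨U, hU, hqU, hUY⟩ := exists_isOpen_mem_disjoint hY hq' hqj (hline _ hq')
  refine interior_maximal (fun x hx => ?_) (hU.preimage continuous_subtype_val) hqU
  obtain ⟨i, hi⟩ := Set.mem_iUnion.1 (hunion.symm ▸ x.2 : x.1 ∈ ⋃ i, Y i)
  have hij : i ≠ j := by
    rintro rfl
    exact Set.disjoint_left.1 hUY hx hi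
  exact Set.mem_biUnion (by simpa using hij) hi

theorem isFubini_of_forall_ne_infty {k : ℕ} (hk : Fintype.card ι ≤ k + 2)
    {Y : ι → Set (∀ i, Alpha (κ i))} (hdisj : Pairwise (Disjoint on Y))
    (hunion : ⋃ i, Y i = Xminus κ) (hY : ∀ j, ∀ x ∈ Y j, x j ≠ ∞)
    (hline : ∀ j (q : ∀ i, Alpha (κ i)), (∀ i ≠ j, q i ≠ ∞) →
      {v : (κ j).ord.ToType | update q j (v : Alpha (κ j)) ∈ Y j}.Finite) :
    IsFubini κ k Y := by
  refine ⟨hdisj, hunion, fun A hA => ?_⟩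
  rcases Finset.eq_univ_or_eq_univ_erase_of_card_le (A := A) (by omega) with rfl | ⟨j, rfl⟩
  · refine ⟨fun i hi => absurd (Finset.mem_univ i) hi, fun x _ => ?_⟩
    simp [hunion]
  · refine ⟨fun i hi => ?_, setOf_mem_FF_erase_subset_interior hunion (hY j) (hline j)⟩
    obtain rfl : i = j := by simpa using hi
    exact isClopen_preimage_val_DD_erase (hY i) (hline i)

end Fubini

theorem isFubini_onePointPartition {ι : Type} [Fintype ι] [DecidableEq ι] {κ : ι → Cardinal}
    {k : ℕ} (hk : Fintype.card ι ≤ k + 2) {Z : ι → Set (∀ i, (κ i).ord.ToType)}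
    (hdisj : Pairwise (Disjoint on Z)) (hcover : ⋃ j, Z j = Set.univ)
    (hfin : ∀ j, IsFiniteInDirection (Z j) j) :
    IsFubini κ k (onePointPartition Z) :=
  isFubini_of_forall_ne_infty hk (pairwise_disjoint_onePointPartition hdisj)
    (iUnion_onePointPartition hcover) (fun _ _ => ne_infty_of_mem_onePointPartition)
    fun j _ hq => finite_setOf_update_mem_onePointPartition (hfin j) hq

theorem stmt13_general (n : ℕ) (κ : Fin (n + 1) → Cardinal) (hmono : Monotone κ)
    (hsmall : ∃ i : Fin (n + 1), κ i < Cardinal.aleph (i : ℕ)) :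
    (∃ Y : Fin (n + 1) → Set (∀ i, Alpha (κ i)), IsFubini κ (n - 1) Y) ∧
    ∃ Z : Fin (n + 1) → Set (∀ i, (κ i).ord.ToType),
      Pairwise (Disjoint on Z) ∧ (⋃ j, Z j) = Set.univ ∧
      ∀ (j : Fin (n + 1)) (x : ∀ i, (κ i).ord.ToType),
        {v : (κ j).ord.ToType | Function.update x j v ∈ Z j}.Finite := by
  obtain ⟨i₀, hi₀⟩ := hsmall
  obtain ⟨Z, hcover, hfin⟩ := hasFiniteLineCover_toType_of_lt_aleph hmono hi₀
  have hdisj : Pairwise (Disjoint on disjointed Z) := disjoint_disjointed Z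
  have hcover' : ⋃ j, disjointed Z j = Set.univ := iUnion_disjointed.trans hcover
  have hfin' : ∀ j, IsFiniteInDirection (disjointed Z j) j :=
    fun j => (hfin j).mono (disjointed_subset Z j)
  exact ⟨⟨_, isFubini_onePointPartition (by rw [Fintype.card_fin]; omega) hdisj hcover' hfin'⟩,
    _, hdisj, hcover', hfin'⟩

/-- If `κ_{i₀} < ℵ_{i₀}` for some `i₀ ≤ n`, then `X(κ)⁻` admits an `(n-1)`-Fubini partition;
equivalently `∏_{i ≤ n} κᵢ` can be partitioned into sets `Y₀, …, Y_n` with each `Y_j` finite in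
the `j`-th coordinate direction. -/
theorem stmt13 (n : ℕ) (κ : Fin (n + 1) → Cardinal) (hmono : Monotone κ)
    (hinf : ∀ i, ℵ₀ ≤ κ i)
    (hsmall : ∃ i : Fin (n + 1), κ i < Cardinal.aleph (i : ℕ)) :
    (∃ Y : Fin (n + 1) → Set (∀ i, Alpha (κ i)), IsFubini κ (n - 1) Y) ∧
    ∃ Z : Fin (n + 1) → Set (∀ i, (κ i).ord.ToType),
      Pairwise (Disjoint on Z) ∧ (⋃ j, Z j) = Set.univ ∧
      ∀ (j : Fin (n + 1)) (x : ∀ i, (κ i).ord.ToType),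
        {v : (κ j).ord.ToType | Function.update x j v ∈ Z j}.Finite :=
  stmt13_general n κ hmono hsmall
end

section
/- Let κ = ⟨κ₀ ≤ … ≤ κ_n⟩ be a weakly increasing tuple of infinite cardinals such that κ_i < ℵ_i for some i ≤ n. Then H^n(X(κ)⁻, ℤ/2) = 0; concretely, every function f : ∏_{i≤n} κᵢ → ℤ/2 can be written as a sum f = Σ_{i≤n} g_i where each g_i : ∏_{i≤n} κᵢ → ℤ/2 extends to a continuous function on D_{{0,…,n}∖{i}} (equivalently, for each fixed choice of all coordinates other than the i-th, g_i is constant outside a finite set of values of the i-th coordinate). -/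
/-!
Because `κ_i < ℵ_i`, Kuratowski's free set theorem labels each point of `∏ κ_i` by an index so
that the points labelled `j` meet every line parallel to the `j`-th axis in a finite set. For a
set of size `< ℵ_(m+1)`, embedded in `ω_m`, a tuple `x` is labelled by the position `k` of a
largest coordinate combined with the label that the remaining coordinates receive in the initial
segment below `x k`, which has size `< ℵ_m`. Hence `f = ∑ j, g_j`, where `g_j` is `f` on the
points labelled `j` and `0` elsewhere, and `g_j` extends by `0` to a continuous function on
`D_{univ ∖ {j}}`.
-/

set_option linter.unusedSectionVars false

open Cardinal Function OnePoint

noncomputable section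

variable {ι : Type} [Fintype ι] [DecidableEq ι]

/-- The labellings of Kuratowski's free set theorem. -/
def IsKuratowskiLabelling {ι : Type*} [DecidableEq ι] {Z : ι → Type*} (F : (∀ i, Z i) → ι) :
    Prop :=
  ∀ (p : ι) (x : ∀ i, Z i), {t : Z p | F (update x p t) = p}.Finite

namespace IsKuratowskiLabelling

variable {ι : Type*} [DecidableEq ι]

theorem comp_injective {Z W : ι → Type*} {F : (∀ i, W i) → ι} (hF : IsKuratowskiLabelling F)
    {e : ∀ i, Z i → W i} (he : ∀ i, Injective (e i)) :
    IsKuratowskiLabelling fun x : ∀ i, Z i => F fun i => e i (x i) := by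
  intro p x
  refine (hF p fun i => e i (x i)).preimage (he p).injOn |>.subset fun t ht => ?_
  simpa only [Set.mem_preimage, Set.mem_ofPred_eq, ← funext (apply_update e x p t)] using ht

theorem reindex {ι' : Type*} [DecidableEq ι'] {Z : ι' → Type*} {σ : ι → ι'} (hσ : Injective σ)
    {F : (∀ i, Z (σ i)) → ι} (hF : IsKuratowskiLabelling F) :
    IsKuratowskiLabelling fun x : ∀ i, Z i => σ (F fun i => x (σ i)) := by
  intro p x
  by_cases hp : p ∈ Set.range σ
  · obtain ⟨q, rfl⟩ := hp
    simpa only [update_comp_eq_of_injective' x hσ, hσ.eq_iff] using hF q fun i => x (σ i)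
  · exact Set.finite_empty.subset fun t ht => hp ⟨_, ht⟩

theorem exists_extend {X : Type*} [Inhabited ι] {s : Set X} {F : (ι → s) → ι}
    (hF : IsKuratowskiLabelling F) :
    ∃ G : (ι → X) → ι, ∀ (p : ι) (v : ι → X),
      {t | (∀ j, update v p t j ∈ s) ∧ G (update v p t) = p}.Finite := by
  classical
  refine ⟨fun v => if h : ∀ j, v j ∈ s then F fun j => ⟨v j, h j⟩ else default, fun p v => ?_⟩
  set S := {t | (∀ j, update v p t j ∈ s) ∧ _}
  rcases S.eq_empty_or_nonempty with h | ⟨t₀, ht₀, -⟩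
  · simp [h]
  set w : ι → s := fun j => ⟨update v p t₀ j, ht₀ j⟩
  refine ((hF p w).image Subtype.val).subset fun t ⟨hts, ht⟩ =>
    ⟨⟨t, by simpa using hts p⟩, ?_, rfl⟩
  have hw : (fun j => (⟨update v p t j, hts j⟩ : s)) =
      update w p ⟨t, by simpa using hts p⟩ := by
    funext j
    by_cases hj : j = p
    · subst hj; simp
    · simp [w, hj]
  simpa only [Set.mem_ofPred_eq, dif_pos hts, hw] using ht

end IsKuratowskiLabelling

theorem exists_isKuratowskiLabelling_of_Iic {X : Type*} [LinearOrder X] {m : ℕ}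
    (h : ∀ b : X, ∃ F : (Fin (m + 1) → Set.Iic b) → Fin (m + 1), IsKuratowskiLabelling F) :
    ∃ F : (Fin (m + 2) → X) → Fin (m + 2), IsKuratowskiLabelling F := by
  choose G hG using fun b => (h b).choose_spec.exists_extend
  choose top htop using fun x : Fin (m + 2) → X => Finite.exists_max x
  refine ⟨fun x => (top x).succAbove (G (x (top x)) (x ∘ (top x).succAbove)), fun p x => ?_⟩
  refine (Set.finite_iUnion fun k => Set.finite_iUnion fun j =>
    hG (x k) j (x ∘ k.succAbove)).subset fun t ht => ?_
  obtain ⟨k, hk⟩ : ∃ k, top (update x p t) = k := ⟨_, rfl⟩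
  have hmax : ∀ i, update x p t i ≤ update x p t k := hk ▸ htop _
  simp only [Set.mem_ofPred_eq, hk] at ht
  have hkp : k ≠ p := fun hkp => Fin.succAbove_ne k _ (ht.trans hkp.symm)
  obtain ⟨j, rfl⟩ := Fin.exists_succAbove_eq hkp.symm
  have hline : update x (k.succAbove j) t ∘ k.succAbove = update (x ∘ k.succAbove) j t :=
    update_comp_eq_of_injective x Fin.succAbove_right_injective j t
  have hxk : update x (k.succAbove j) t k = x k := update_of_ne hkp _ _
  simp only [Set.mem_iUnion]
  refine ⟨k, j, fun i => ?_, Fin.succAbove_right_injective (by rwa [← hline, ← hxk])⟩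
  rw [← hline, Set.mem_Iic, ← hxk]
  exact hmax _

theorem Cardinal.mk_Iic_toType_ord_lt {c : Cardinal} (hc : ℵ₀ ≤ c) (i : c.ord.ToType) :
    #(Set.Iic i) < c := by
  rw [← Set.Iio_insert]
  exact Cardinal.mk_insert_le.trans_lt
    (add_lt_of_lt hc (by simpa using mk_Iio_lt i) (one_lt_aleph0.trans_le hc))

theorem exists_isKuratowskiLabelling_of_lt_aleph {m : ℕ} {X : Type*} (hX : #X < ℵ_ m) :
    ∃ F : (Fin (m + 1) → X) → Fin (m + 1), IsKuratowskiLabelling F := by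
  induction m generalizing X with
  | zero =>
    have : Finite X := lt_aleph0_iff_finite.mp (by simpa using hX)
    exact ⟨fun _ => 0, fun _ _ => Set.toFinite _⟩
  | succ m ih =>
    have hX : #X ≤ ℵ_ m := by
      rwa [Nat.cast_succ, ← succ_aleph, Order.lt_succ_iff] at hX
    obtain ⟨e⟩ : Nonempty (X ↪ (ℵ_ m).ord.ToType) := by
      rwa [← le_def, mk_toType, card_ord]
    obtain ⟨F, hF⟩ := exists_isKuratowskiLabelling_of_Iic fun b =>
      ih (mk_Iic_toType_ord_lt (aleph0_le_aleph _) b)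
    exact ⟨_, hF.comp_injective fun _ => e.injective⟩

theorem exists_isKuratowskiLabelling_of_monotone {n : ℕ} {κ : Fin (n + 1) → Cardinal}
    (hmono : Monotone κ) (hsmall : ∃ i : Fin (n + 1), κ i < ℵ_ (i : ℕ)) :
    ∃ F : (∀ i, (κ i).ord.ToType) → Fin (n + 1), IsKuratowskiLabelling F := by
  obtain ⟨i, hi⟩ := hsmall
  have hle : (i : ℕ) + 1 ≤ n + 1 := i.isLt
  obtain ⟨F, hF⟩ := exists_isKuratowskiLabelling_of_lt_aleph (X := (κ i).ord.ToType)
    (by rwa [mk_toType, card_ord])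
  have he : ∀ j : Fin (i + 1),
      Nonempty ((κ (Fin.castLE hle j)).ord.ToType ↪ (κ i).ord.ToType) := fun j => by
    rw [← le_def, mk_toType, mk_toType, card_ord, card_ord]
    exact hmono (Fin.le_def.mpr (Nat.lt_succ_iff.mp j.isLt))
  exact ⟨_, (hF.comp_injective fun j => (he j).some.injective).reindex
    (Fin.castLE_injective hle)⟩

theorem OnePoint.isOpen_singleton_of_ne_infty {Y : Type*} [TopologicalSpace Y]
    [DiscreteTopology Y] {y : OnePoint Y} (hy : y ≠ ∞) : IsOpen ({y} : Set (OnePoint Y)) :=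
  (OnePoint.isOpen_iff_of_notMem (by simpa using hy.symm)).mpr (isOpen_discrete _)

theorem isOpen_setOf_forall_mem_eq {κ : ι → Cardinal} {A : Finset ι} {z : ∀ i, Alpha (κ i)}
    (hz : z ∈ DD κ A) : IsOpen {w : ∀ i, Alpha (κ i) | ∀ i ∈ A, w i = z i} := by
  convert isOpen_biInter_finset fun i hi =>
    (OnePoint.isOpen_singleton_of_ne_infty (hz i hi)).preimage (continuous_apply i) using 1
  ext w
  simp

theorem finite_image_apply_of_finite_sections {κ : ι → Cardinal} {M : Type*} [Zero M] {j : ι}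
    {g : (∀ i, (κ i).ord.ToType) → M} (hg : ∀ x, {t | g (update x j t) ≠ 0}.Finite)
    (z : ∀ i, Alpha (κ i)) :
    ((fun x => x j) ''
      {x | (∀ i ∈ Finset.univ.erase j, (x i : Alpha (κ i)) = z i) ∧ g x ≠ 0}).Finite := by
  set T := {x | (∀ i ∈ Finset.univ.erase j, (x i : Alpha (κ i)) = z i) ∧ g x ≠ 0}
  rcases T.eq_empty_or_nonempty with h | ⟨x₀, hx₀, -⟩
  · simp only [h, Set.image_empty, Set.finite_empty]
  refine (hg x₀).subset ?_
  rintro _ ⟨x, ⟨hx, hgx⟩, rfl⟩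
  have hline : update x₀ j (x j) = x := by
    funext i
    by_cases hij : i = j
    · subst hij; simp
    · rw [update_of_ne hij]
      exact coe_injective ((hx₀ i (by simp [hij])).trans (hx i (by simp [hij])).symm)
  simpa [hline] using hgx

theorem exists_continuous_extend_of_finite_sections {κ : ι → Cardinal} {M : Type*}
    [TopologicalSpace M] [Zero M] (j : ι) (g : (∀ i, (κ i).ord.ToType) → M)
    (hg : ∀ x, {t | g (update x j t) ≠ 0}.Finite) :
    ∃ G : DD κ (Finset.univ.erase j) → M, Continuous G ∧
      ∀ x, g x = G ⟨fun i => (x i : Alpha (κ i)), fun i _ => coe_ne_infty (x i)⟩ := by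
  set e : (∀ i, (κ i).ord.ToType) → DD κ (Finset.univ.erase j) :=
    fun x => ⟨fun i => (x i : Alpha (κ i)), fun i _ => coe_ne_infty (x i)⟩
  have he : Injective e := fun x y hxy =>
    funext fun i => OnePoint.coe_injective (congrFun (congrArg Subtype.val hxy) i)
  refine ⟨extend e g 0, IsLocallyConstant.continuous ?_, fun x => (he.extend_apply g 0 x).symm⟩
  rw [IsLocallyConstant.iff_exists_open]
  intro z
  by_cases hzj : z.1 j = ∞
  · -- a neighbourhood of `z` on its line, avoiding the finitely many points where `g ≠ 0`
    set S := (fun x => x j) ''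
      {x | (∀ i ∈ Finset.univ.erase j, (x i : Alpha (κ i)) = z.1 i) ∧ g x ≠ 0}
    have hS : S.Finite := finite_image_apply_of_finite_sections hg z.1
    refine ⟨Subtype.val ⁻¹' ({w | ∀ i ∈ Finset.univ.erase j, w i = z.1 i} ∩
        (fun w => w j) ⁻¹' ((↑) '' S)ᶜ),
      ((isOpen_setOf_forall_mem_eq z.2).inter ((isOpen_compl_image_coe.mpr
        ⟨isClosed_discrete _, hS.isCompact⟩).preimage (continuous_apply j))).preimage
        continuous_subtype_val,
      ⟨fun i _ => rfl, by simp [hzj]⟩, fun w hw => ?_⟩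
    have hz0 : extend e g 0 z = 0 :=
      extend_apply' _ _ _ fun ⟨x, hx⟩ => coe_ne_infty (x j) (by rw [← hzj, ← hx])
    rw [hz0]
    by_cases hw' : ∃ x, e x = w
    · obtain ⟨x, rfl⟩ := hw'
      rw [he.extend_apply]
      by_contra hgx
      exact hw.2 ⟨x j, ⟨x, ⟨hw.1, hgx⟩, rfl⟩, rfl⟩
    · exact extend_apply' _ _ _ hw'
  · have hz : z.1 ∈ DD κ Finset.univ := fun i _ => by
      by_cases hij : i = j
      · exact hij ▸ hzj
      · exact z.2 i (by simp [hij])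
    refine ⟨_, (isOpen_setOf_forall_mem_eq hz).preimage continuous_subtype_val, fun i _ => rfl,
      fun w hw => ?_⟩
    rw [Subtype.ext (funext fun i => hw i (Finset.mem_univ i))]

theorem topCoboundary_of_isKuratowskiLabelling {κ : ι → Cardinal}
    {L : (∀ i, (κ i).ord.ToType) → ι} (hL : IsKuratowskiLabelling L)
    (f : (∀ i, (κ i).ord.ToType) → ZMod 2) : TopCoboundary κ f := by
  refine ⟨fun j x => if L x = j then f x else 0, fun x => by simp, fun j =>
    exists_continuous_extend_of_finite_sections j _ fun x => (hL j x).subset fun t ht => ?_⟩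
  by_contra h
  exact ht (if_neg h)

theorem stmt14_general (n : ℕ) (κ : Fin (n + 1) → Cardinal) (hmono : Monotone κ)
    (hsmall : ∃ i : Fin (n + 1), κ i < Cardinal.aleph (i : ℕ))
    (f : (∀ i, (κ i).ord.ToType) → ZMod 2) :
    TopCoboundary κ f := by
  obtain ⟨L, hL⟩ := exists_isKuratowskiLabelling_of_monotone hmono hsmall
  exact topCoboundary_of_isKuratowskiLabelling hL f

/-- If `κ_i < ℵ_i` for some `i ≤ n`, then `H^n(X(κ)⁻, ℤ/2) = 0`: every function
`∏_{i ≤ n} κᵢ → ℤ/2` is a top-degree coboundary. -/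
theorem stmt14 (n : ℕ) (κ : Fin (n + 1) → Cardinal) (hmono : Monotone κ)
    (hinf : ∀ i, ℵ₀ ≤ κ i)
    (hsmall : ∃ i : Fin (n + 1), κ i < Cardinal.aleph (i : ℕ))
    (f : (∀ i, (κ i).ord.ToType) → ZMod 2) :
    TopCoboundary κ f :=
  stmt14_general n κ hmono hsmall f
end
end

section
/- Let 0 < k < n, let κ = ⟨κ₀,…,κ_n⟩ be a tuple of infinite cardinals, let B ⊆ {0,…,n} with |B| = k+1, and let f = ⟨f_A⟩ be a k-cocycle on X(κ)⁻. Define φ_{f,B} : ∏_{i∉B} α(κᵢ) → (∏_{i∈B} κᵢ → ℤ/2) by φ_{f,B}(x)(y) = f_B(x, y). Then φ_{f,B} is continuous when the codomain carries the product (pointwise-convergence) topology with ℤ/2 discrete; moreover, for every x ∈ ∏_{i∉B} α(κᵢ) other than (∞,…,∞), the function φ_{f,B}(x) is a top-degree coboundary for the tuple κ↾B. -/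
set_option linter.unusedSectionVars false

open Cardinal Function OnePoint

noncomputable section

variable {ι : Type} [Fintype ι] [DecidableEq ι]

/-!
Continuity of `φ_{f,B}` is continuity of `f_B` along the slices `y = const`. If `x i₀ ≠ ∞` for
some `i₀ ∉ B`, the cocycle identity on `B ∪ {i₀}` writes `f_B(x, ·)` as
`∑_{j ∈ B} f_{B ∪ {i₀} ∖ {j}}(x, ·)`, and the `j`-th summand is still defined and continuous on
`D_{B ∖ {j}}(κ↾B)`, because the coordinate `i₀` of `x` is finite.
-/

variable {κ : ι → Cardinal} {B : Finset ι}

abbrev combine (x : ∀ i : {i : ι // i ∉ B}, Alpha (κ i)) (w : ∀ i : ↥B, Alpha (κ (i : ι))) :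
    ∀ i, Alpha (κ i) :=
  (Homeomorph.piEquivPiSubtypeProd (· ∈ B) fun i => Alpha (κ i)).symm (w, x)

lemma combineBC_eq_combine (x : ∀ i : {i : ι // i ∉ B}, Alpha (κ i))
    (y : ∀ i : ↥B, (κ (i : ι)).ord.ToType) :
    combineBC κ B x y = combine x (fun i => (y i : Alpha (κ i))) :=
  rfl

lemma DD_antitone {A C : Finset ι} (h : A ⊆ C) : DD κ C ⊆ DD κ A :=
  fun _ hz i hi => hz i (h hi)

lemma Cochain.apply_congr (f : Cochain κ) {A C : Finset ι} (h : A = C)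
    {z : ∀ i, Alpha (κ i)} (hA : z ∈ DD κ A) (hC : z ∈ DD κ C) : f A ⟨z, hA⟩ = f C ⟨z, hC⟩ := by
  subst h
  rfl

lemma continuous_phiMap {f : Cochain κ} (hf : Continuous (f B)) : Continuous (phiMap κ B f) := by
  refine continuous_pi fun y => hf.comp (Continuous.subtype_mk ?_ _)
  simp only [combineBC_eq_combine]
  fun_prop

/-- The cocycle identity on `insert i₀ B`, solved for the `B`-face (signs vanish in `ZMod 2`). -/
lemma IsCocycle.apply_eq_sum_insert {k : ℕ} {f : Cochain κ} (hf : IsCocycle κ k f)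
    (hB : B.card = k + 1) {i₀ : ι} (hi₀ : i₀ ∉ B) {z : ∀ i, Alpha (κ i)}
    (hz : z ∈ DD κ (insert i₀ B)) :
    f B ⟨z, DD_antitone (B.subset_insert i₀) hz⟩ =
      ∑ j ∈ B, f ((insert i₀ B).erase j) ⟨z, DD_antitone (Finset.erase_subset _ _) hz⟩ := by
  have hcard : (insert i₀ B).card = k + 2 := by rw [Finset.card_insert_of_notMem hi₀, hB]
  have hcocycle := hf.2 _ hcard ⟨z, hz⟩
  rw [cb, Finset.sum_insert hi₀, CharTwo.add_eq_zero] at hcocycle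
  exact (f.apply_congr (Finset.erase_insert hi₀).symm _ _).trans hcocycle

lemma IsCocycle.topCoboundary_phiMap {k : ℕ} {f : Cochain κ} (hf : IsCocycle κ k f)
    (hB : B.card = k + 1) {x : ∀ i : {i : ι // i ∉ B}, Alpha (κ i)} {i₀ : {i : ι // i ∉ B}}
    (hx : x i₀ ≠ ∞) : TopCoboundary (fun i : ↥B => κ (i : ι)) (phiMap κ B f x) := by
  set A := insert (i₀ : ι) B
  have hmem : ∀ (j : ↥B) (w : ∀ i : ↥B, Alpha (κ (i : ι))),
      w ∈ DD (fun i : ↥B => κ (i : ι)) (Finset.univ.erase j) → combine x w ∈ DD κ (A.erase j) := by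
    intro j w hw i hi
    obtain ⟨hij, hi⟩ := Finset.mem_erase.1 hi
    rcases Finset.mem_insert.1 hi with rfl | hiB
    · simpa [i₀.2] using hx
    · simpa [hiB] using hw ⟨i, hiB⟩ (by simpa [Subtype.ext_iff] using hij)
  have hcard : ∀ j : ↥B, (A.erase j).card = k + 1 := fun j => by
    rw [Finset.card_erase_of_mem (Finset.mem_insert_of_mem j.2), Finset.card_insert_of_notMem i₀.2,
      hB, Nat.add_sub_cancel]
  refine ⟨fun j y => f (A.erase j) ⟨combine x fun i => (y i : Alpha (κ i)),
      hmem j _ fun i _ => OnePoint.coe_ne_infty _⟩, fun y => ?_,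
    fun j => ⟨fun w => f (A.erase j) ⟨combine x w, hmem j w.1 w.2⟩, ?_, fun y => rfl⟩⟩
  · have hz : combineBC κ B x y ∈ DD κ A := by
      intro i hi
      rcases Finset.mem_insert.1 hi with rfl | hiB
      · simpa [combineBC, i₀.2] using hx
      · simp [combineBC, hiB]
    exact (hf.apply_eq_sum_insert hB i₀.2 hz).trans (Finset.sum_coe_sort B _).symm
  · exact (hf.1 _ (hcard j)).comp (Continuous.subtype_mk (by fun_prop) _)

theorem stmt16_general (n k : ℕ)
    (κ : Fin (n + 1) → Cardinal)
    (B : Finset (Fin (n + 1))) (hB : B.card = k + 1)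
    (f : Cochain κ) (hf : IsCocycle κ k f) :
    Continuous (phiMap κ B f) ∧
    ∀ x : ∀ i : {i : Fin (n + 1) // i ∉ B}, Alpha (κ (i : Fin (n + 1))),
      (∃ i, x i ≠ ∞) →
      TopCoboundary (fun i : ↥B => κ (i : Fin (n + 1))) (phiMap κ B f x) :=
  ⟨continuous_phiMap (hf.1 B hB), fun _ ⟨_, hx⟩ => hf.topCoboundary_phiMap hB hx⟩

/-- For a `k`-cocycle `f`, the map `φ_{f,B}` is continuous and sends every point other than
`(∞,…,∞)` to a top-degree coboundary of `κ↾B`. -/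
theorem stmt16 (n k : ℕ) (hk0 : 0 < k) (hkn : k < n)
    (κ : Fin (n + 1) → Cardinal) (hinf : ∀ i, ℵ₀ ≤ κ i)
    (B : Finset (Fin (n + 1))) (hB : B.card = k + 1)
    (f : Cochain κ) (hf : IsCocycle κ k f) :
    Continuous (phiMap κ B f) ∧
    ∀ x : ∀ i : {i : Fin (n + 1) // i ∉ B}, Alpha (κ (i : Fin (n + 1))),
      (∃ i, x i ≠ ∞) →
      TopCoboundary (fun i : ↥B => κ (i : Fin (n + 1))) (phiMap κ B f x) :=
  stmt16_general n k κ B hB f hf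

end
end

section
/- Let z and k be positive integers, let n = z + k, and let κ = ⟨κ₀,…,κ_n⟩ be a tuple of cardinals such that κᵢ = ℵ₀ for all i < z and the cardinals κ_z < κ_{z+1} < … < κ_{z+k} are uncountable and strictly increasing. Then H^k(X(κ)⁻, ℤ/2) ≠ 0; that is, there exists a k-cocycle on X(κ)⁻ that is not a k-coboundary. In particular, H^n(X(ℵ₀, ℵ₁, …, ℵ_{n+1})⁻, ℤ/2) ≠ 0 for every n ≥ 1. -/
set_option linter.unusedSectionVars false

open Cardinal Function OnePoint

noncomputable section

variable {ι : Type} [Fintype ι] [DecidableEq ι]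

/-!
Let `C` be the `k` uncountable coordinates, `t = z + k` the top one and `w = 0` a countable one.
Fix injections `d i : ℕ ↪ κ i` and `Γ : (∏_{i ∈ C} κ i) × ℕ ↪ κ t`, which exists because `κ t`
exceeds every `κ i` with `i ∈ C`. Let `G` be the set of points with `d i j` at the coordinates
`i ∉ C ∪ {t}`, `y` on `C` and `Γ (y, j)` at `t`. The witness `f` is the indicator of `G` on the
faces `C ∪ {a}` and zero on all other `k`-faces. It is a cocycle because each coefficient of `df`
counts the two points of `A \ C`, and it is continuous because the points of `G` are isolated and
`G` meets each fibre of `D_{C ∪ {a}}` over the `(C ∪ {a})`-coordinates at most once.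

If `f = dg`, every `g_B` is constant on a box around each point: finite coordinates pinned, finitely
many values forbidden at infinite ones. As the `κ i`, `i ∈ C`, are uncountable and distinct, some
`y` avoids, together with its `Γ`-values, the countably many values forbidden on the faces
`(C ∪ {w}) \ {a}`, and then some `j` avoids the finitely many values forbidden on the face `C`.
The point of `G` given by `(y, j)` and the same point with `t`-coordinate `∞` then lie in a common
box of every face of `C ∪ {w}`, so `(dg)_{C ∪ {w}}` agrees at both, whereas `f` is `1` and `0`.
-/

open Topology

namespace OnePoint

variable {Y : Type*}

def basicNbhd (v₀ : OnePoint Y) (E : Set Y) : Set (OnePoint Y) :=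
  {v | v = v₀ ∨ (v₀ = ∞ ∧ v ∉ ((↑) '' E : Set (OnePoint Y)))}

theorem basicNbhd_infty (E : Set Y) : basicNbhd ∞ E = ((↑) '' E)ᶜ := by
  ext v
  simp only [basicNbhd, true_and, Set.mem_ofPred_eq, Set.mem_compl_iff, or_iff_right_iff_imp]
  rintro rfl ⟨a, -, ha⟩
  exact coe_ne_infty a ha

theorem basicNbhd_coe (a : Y) (E : Set Y) : basicNbhd (a : OnePoint Y) E = {(a : OnePoint Y)} := by
  simp [basicNbhd]

variable [TopologicalSpace Y] [DiscreteTopology Y]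

theorem isOpen_basicNbhd (v₀ : OnePoint Y) {E : Set Y} (hE : E.Finite) :
    IsOpen (basicNbhd v₀ E) := by
  induction v₀ using OnePoint.rec with
  | infty => exact basicNbhd_infty E ▸ isOpen_compl_image_coe.2 ⟨isClosed_discrete E, hE.isCompact⟩
  | coe a =>
    rw [basicNbhd_coe, ← Set.image_singleton]
    exact isOpenEmbedding_coe.isOpenMap {a} (isOpen_discrete _)

theorem exists_basicNbhd_subset {v₀ : OnePoint Y} {V : Set (OnePoint Y)} (hV : V ∈ 𝓝 v₀) :
    ∃ E : Set Y, E.Finite ∧ basicNbhd v₀ E ⊆ V := by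
  induction v₀ using OnePoint.rec with
  | infty =>
    obtain ⟨E, ⟨-, hE⟩, hEV⟩ := hasBasis_nhds_infty.mem_iff.1 hV
    exact ⟨E, isCompact_iff_finite.1 hE, by rwa [basicNbhd_infty, compl_image_coe]⟩
  | coe a =>
    exact ⟨∅, Set.finite_empty, by simpa [basicNbhd_coe] using mem_of_mem_nhds hV⟩

end OnePoint

section Box

variable {σ : Type*} {X : σ → Type*}

def box (x₀ : ∀ i, OnePoint (X i)) (F : ∀ i, Set (X i)) : Set (∀ i, OnePoint (X i)) :=
  Set.univ.pi fun i => basicNbhd (x₀ i) (F i)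

variable {x₀ x : ∀ i, OnePoint (X i)} {F : ∀ i, Set (X i)}

theorem mem_box : x ∈ box x₀ F ↔ ∀ i, x i = x₀ i ∨ (x₀ i = ∞ ∧ x i ∉ (↑) '' F i) :=
  Set.mem_univ_pi

theorem mem_box_self : x₀ ∈ box x₀ F :=
  mem_box.2 fun _ => Or.inl rfl

theorem eq_of_mem_box (hx : x ∈ box x₀ F) (h₀ : ∀ i, x₀ i ≠ ∞) : x = x₀ :=
  funext fun i => ((mem_box.1 hx) i).resolve_right fun h => h₀ i h.1

theorem update_infty_mem_box [DecidableEq σ] {j : σ} (hx : x ∈ box x₀ F) (hj : x₀ j = ∞) :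
    update x j ∞ ∈ box x₀ F := by
  refine mem_box.2 fun i => ?_
  rcases eq_or_ne i j with rfl | hij
  · simp [hj]
  · simpa [hij] using (mem_box.1 hx) i

variable [∀ i, TopologicalSpace (X i)] [∀ i, DiscreteTopology (X i)] [Finite σ]

theorem nhds_hasBasis_box (x₀ : ∀ i, OnePoint (X i)) :
    (𝓝 x₀).HasBasis (fun F : ∀ i, Set (X i) => ∀ i, (F i).Finite) (box x₀) := by
  refine ⟨fun U => ⟨fun hU => ?_, fun ⟨F, hF, hsub⟩ => ?_⟩⟩
  · rw [nhds_pi, Filter.mem_pi'] at hU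
    obtain ⟨I, V, hV, hIV⟩ := hU
    choose F hF hFV using fun i => exists_basicNbhd_subset (hV i)
    exact ⟨F, hF, fun x hx => hIV fun i _ => hFV i (hx i (Set.mem_univ i))⟩
  · exact Filter.mem_of_superset ((isOpen_set_pi Set.finite_univ fun i _ =>
      isOpen_basicNbhd (x₀ i) (hF i)).mem_nhds mem_box_self) hsub

end Box

section Subspace

variable {σ : Type*} {X : σ → Type*} [∀ i, TopologicalSpace (X i)] [∀ i, DiscreteTopology (X i)]
  [Finite σ] {D : Set (∀ i, OnePoint (X i))}

theorem nhds_subtype_hasBasis_box (x : D) :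
    (𝓝 x).HasBasis (fun F : ∀ i, Set (X i) => ∀ i, (F i).Finite)
      (fun F => Subtype.val ⁻¹' box x.1 F) := by
  rw [nhds_subtype]
  exact (nhds_hasBasis_box _).comap _

theorem Continuous.exists_box_const {Z : Type*} [TopologicalSpace Z] [DiscreteTopology Z]
    {g : D → Z} (hg : Continuous g) (x₀ : D) :
    ∃ F : ∀ i, Set (X i), (∀ i, (F i).Finite) ∧ ∀ x : D, x.1 ∈ box x₀.1 F → g x = g x₀ :=
  (nhds_subtype_hasBasis_box x₀).mem_iff.1 (hg.continuousAt ((isOpen_discrete {g x₀}).mem_nhds rfl))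

theorem isClopen_preimage_val_of_finite_fibers {S : Set (∀ i, OnePoint (X i))}
    (hS : ∀ s ∈ S, ∀ i, s i ≠ ∞)
    (hfib : ∀ x ∈ D, {s ∈ S | ∀ i, x i ≠ ∞ → s i = x i}.Finite) :
    IsClopen (Subtype.val ⁻¹' S : Set D) := by
  refine ⟨⟨isOpen_iff_mem_nhds.2 fun x hx => ?_⟩, ?_⟩
  · set T := {s ∈ S | ∀ i, x.1 i ≠ ∞ → s i = x.1 i}
    refine (nhds_subtype_hasBasis_box x).mem_iff.2 ⟨fun i => (↑) ⁻¹' ((fun s => s i) '' T),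
      fun i => ((hfib x x.2).image _).preimage coe_injective.injOn, fun x' hx' hx'S => ?_⟩
    have hT : x'.1 ∈ T :=
      ⟨hx'S, fun i hi => ((mem_box.1 hx') i).resolve_right fun h => hi h.1⟩
    obtain ⟨i, hi⟩ := ne_iff.1 fun h : x'.1 = x.1 => hx (show x.1 ∈ S from h ▸ hx'S)
    rcases (mem_box.1 hx') i with h | ⟨-, h⟩
    · exact hi h
    · obtain ⟨a, ha⟩ := ne_infty_iff_exists.1 (hS _ hx'S i)
      exact h ⟨a, ⟨x'.1, hT, ha.symm⟩, ha⟩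
  · refine (isOpen_iff_mem_nhds.2 fun s hs => (nhds_hasBasis_box s).mem_iff.2
      ⟨fun _ => ∅, fun _ => Set.finite_empty, fun x hx => ?_⟩).preimage continuous_subtype_val
    exact (eq_of_mem_box hx (hS s hs)).symm ▸ hs

end Subspace

section CardinalAvoidance

universe u

theorem mk_pi_mul_aleph0_lt {σ : Type u} [Finite σ] {τ : σ → Type u} {μ : Cardinal.{u}}
    (hμ : ℵ₀ < μ) (h : ∀ i, #(τ i) < μ) : #(∀ i, τ i) * ℵ₀ < μ := by
  have := Fintype.ofFinite σ
  set M := (Finset.univ.sup fun i => #(τ i)) ⊔ ℵ₀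
  have hM : M < μ := max_lt ((Finset.sup_lt_iff (bot_lt_iff_ne_bot.2 (aleph0_pos.trans hμ).ne')).2
    fun i _ => h i) hμ
  have hle : #(∀ i, τ i) ≤ M := calc
    #(∀ i, τ i) = prod fun i => #(τ i) := mk_pi _
    _ ≤ prod fun _ => M := prod_le_prod _ _ fun i => le_sup_of_le_left
      (Finset.le_sup (f := fun i => #(τ i)) (Finset.mem_univ i))
    _ = M ^ #σ := prod_const' _ _
    _ ≤ M := pow_le le_sup_right (lt_aleph0_of_finite σ)
  calc #(∀ i, τ i) * ℵ₀ ≤ M * ℵ₀ := mul_le_mul_left hle _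
    _ = M := mul_aleph0_eq le_sup_right
    _ < μ := hM

theorem exists_forall_notMem_of_countable {σ : Type u} [Finite σ] [DecidableEq σ] {τ : σ → Type u}
    (hunc : ∀ a, ℵ₀ < #(τ a)) (hinj : Injective fun a => #(τ a))
    (Bad : ∀ a, (∀ b, τ b) → Set (τ a)) (hBad : ∀ a y, (Bad a y).Countable)
    (hdep : ∀ a y v, Bad a (update y a v) = Bad a y) :
    ∃ y : ∀ a, τ a, ∀ a, y a ∉ Bad a y := by
  have := Fintype.ofFinite σ
  have hne : ∀ a, Nonempty (τ a) := fun a => mk_ne_zero_iff.1 (aleph0_pos.trans (hunc a)).ne'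
  suffices H : ∀ (s : Finset σ) (y₀ : ∀ a, τ a),
      ∃ y : ∀ a, τ a, (∀ a ∉ s, y a = y₀ a) ∧ ∀ a ∈ s, y a ∉ Bad a y by
    obtain ⟨y, -, hy⟩ := H Finset.univ fun a => (hne a).some
    exact ⟨y, fun a => hy a (Finset.mem_univ a)⟩
  intro s
  -- Add coordinates in order of increasing cardinality: as the earlier coordinates vary, the bad
  -- sets of the newest coordinate `a` cover fewer than `#(τ a)` points.
  induction s using Finset.induction_on_max_value (fun a => #(τ a)) with
  | empty => exact fun y₀ => ⟨y₀, fun _ _ => rfl, by simp⟩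
  | insert a s has hmax ih =>
    intro y₀
    set Y := {y : ∀ b, τ b | ∀ b ∉ s, y b = y₀ b}
    have hY : #Y ≤ #(∀ b : s, τ b) := by
      refine mk_le_of_injective (f := fun y b => y.1 b) fun y y' h =>
        Subtype.ext (funext fun b => ?_)
      by_cases hb : b ∈ s
      · exact congrFun h ⟨b, hb⟩
      · rw [y.2 b hb, y'.2 b hb]
    have hlt : #(⋃ y ∈ Y, Bad a y) < #(τ a) := calc
      _ ≤ #Y * ⨆ y : Y, #(Bad a y) := mk_biUnion_le _ _
      _ ≤ #(∀ b : s, τ b) * ℵ₀ := mul_le_mul' hY (ciSup_le' fun y => (hBad a y).le_aleph0)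
      _ < #(τ a) := mk_pi_mul_aleph0_lt (hunc a) fun b =>
          (hmax b b.2).lt_of_ne fun h => has (hinj h ▸ b.2)
    obtain ⟨v, hv⟩ : ∃ v, v ∉ ⋃ y ∈ Y, Bad a y := by
      by_contra! h
      exact hlt.not_ge (mk_univ (α := τ a) ▸ mk_le_mk_of_subset fun v _ => h v)
    obtain ⟨y, hys, hyBad⟩ := ih (update y₀ a v)
    refine ⟨y, fun b hb => ?_, fun b hb => ?_⟩
    · rw [hys b fun h => hb (Finset.mem_insert_of_mem h),
        update_of_ne (ne_of_mem_of_not_mem (Finset.mem_insert_self a s) hb).symm]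
    rcases Finset.mem_insert.1 hb with rfl | hb
    · rw [hys b has, update_self, ← hdep b y (y₀ b)]
      refine fun hmem => hv (Set.mem_biUnion (x := update y b (y₀ b)) (fun c hc => ?_) hmem)
      rcases eq_or_ne c b with rfl | hcb
      · exact update_self _ _ _
      · rw [update_of_ne hcb, hys c hc, update_of_ne hcb]
    · exact hyBad b hb

end CardinalAvoidance

section Cochains

variable {κ : ι → Cardinal.{0}}

theorem cb_apply_update_infty {g : Cochain κ} {A : Finset ι} {t : ι} {x : ∀ i, Alpha (κ i)}
    (hx : x ∈ DD κ A) (hx' : update x t ∞ ∈ DD κ A)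
    (hface : ∀ i ∈ A, ∃ (x₀ : DD κ (A.erase i)) (E : ∀ i, Set ((κ i).ord.ToType)),
      x₀.1 t = ∞ ∧ x ∈ box x₀.1 E ∧ ∀ x' : DD κ (A.erase i), x'.1 ∈ box x₀.1 E → g _ x' = g _ x₀) :
    cb κ g A ⟨x, hx⟩ = cb κ g A ⟨update x t ∞, hx'⟩ := by
  refine Finset.sum_congr rfl fun i hi => ?_
  obtain ⟨x₀, E, hx₀t, hxE, hconst⟩ := hface i hi
  exact (hconst _ hxE).trans (hconst _ (update_infty_mem_box hxE hx₀t)).symm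

theorem extendInfty_apply_of_mem {B : Finset ι} {y : ∀ i : B, (κ i).ord.ToType} {i : ι}
    (hi : i ∈ B) : extendInfty κ B y i = y ⟨i, hi⟩ := by
  simp [extendInfty, combineBC, hi]

theorem extendInfty_apply_of_notMem {B : Finset ι} {y : ∀ i : B, (κ i).ord.ToType} {i : ι}
    (hi : i ∉ B) : extendInfty κ B y i = ∞ := by
  simp [extendInfty, combineBC, hi]

end Cochains

section Construction

variable {κ : ι → Cardinal.{0}} (C : Finset ι)

def facetIndicator (S : Set (∀ i, Alpha (κ i))) : Cochain κ := fun A =>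
  if C ⊆ A ∧ A.card = C.card + 1 then (Subtype.val ⁻¹' S).indicator 1 else 0

theorem cb_facetIndicator (S : Set (∀ i, Alpha (κ i))) {A : Finset ι} (hA : A.card = C.card + 2)
    (x : DD κ A) : cb κ (facetIndicator C S) A x = 0 := by
  have hterm : ∀ i ∈ A, res (A.erase_subset i) (facetIndicator C S (A.erase i)) x =
      if i ∈ A.filter (C ⊆ A.erase ·) then S.indicator 1 x.1 else 0 := by
    intro i hi
    have hcard : (A.erase i).card = C.card + 1 := by rw [Finset.card_erase_of_mem hi, hA]; rfl
    by_cases hCi : C ⊆ A.erase i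
    · rw [if_pos (Finset.mem_filter.2 ⟨hi, hCi⟩)]
      simp only [res, facetIndicator, if_pos (And.intro hCi hcard)]
      rfl
    · rw [if_neg (show i ∉ A.filter (C ⊆ A.erase ·) from fun h => hCi (Finset.mem_filter.1 h).2)]
      simp only [res, facetIndicator, if_neg fun h : _ ∧ _ => hCi h.1]
      rfl
  have heven : Even (A.filter (C ⊆ A.erase ·)).card := by
    simp only [Finset.subset_erase]
    by_cases hCA : C ⊆ A
    · simp only [hCA, true_and, ← Finset.sdiff_eq_filter, Finset.card_sdiff_of_subset hCA, hA]
      exact ⟨1, by omega⟩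
    · simp [hCA]
  rw [cb, Finset.sum_congr rfl hterm, Finset.sum_ite_mem, Finset.inter_filter, Finset.inter_self,
    Finset.sum_const, nsmul_eq_mul, heven.natCast_zmod_two, zero_mul]

theorem isCochain_facetIndicator {S : Set (∀ i, Alpha (κ i))}
    (hS : ∀ A : Finset ι, C ⊆ A → A.card = C.card + 1 →
      IsClopen (Subtype.val ⁻¹' S : Set (DD κ A))) :
    IsCochain κ C.card (facetIndicator C S) := by
  intro A _
  unfold facetIndicator
  split_ifs with h
  · exact (hS A h.1 h.2).continuous_indicator continuous_const
  · exact continuous_const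

theorem facetIndicator_apply_of_subset {S : Set (∀ i, Alpha (κ i))} {A : Finset ι} (hCA : C ⊆ A)
    (hA : A.card = C.card + 1) (x : DD κ A) : facetIndicator C S A x = S.indicator 1 x.1 := by
  simp only [facetIndicator, if_pos (And.intro hCA hA)]
  rfl

variable (t : ι) (d : ∀ i, ℕ ↪ (κ i).ord.ToType)

def diagPoint (j : ℕ) (y : ∀ i : C, (κ i).ord.ToType) (s : Alpha (κ t)) : ∀ i, Alpha (κ i) :=
  update (fun i => if h : i ∈ C then (y ⟨i, h⟩ : Alpha (κ i)) else d i j) t s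

def diagGraph (Γ : (∀ i : C, (κ i).ord.ToType) × ℕ ↪ (κ t).ord.ToType) :
    Set (∀ i, Alpha (κ i)) :=
  Set.range fun p => diagPoint C t d p.2 p.1 (Γ p)

variable {C t d} {j : ℕ} {y : ∀ i : C, (κ i).ord.ToType} {s : Alpha (κ t)}

@[simp]
theorem diagPoint_apply_self : diagPoint C t d j y s t = s :=
  update_self _ _ _

theorem diagPoint_apply_of_mem (htC : t ∉ C) {i : ι} (hi : i ∈ C) :
    diagPoint C t d j y s i = y ⟨i, hi⟩ := by
  rw [diagPoint, update_of_ne (ne_of_mem_of_not_mem hi htC), dif_pos hi]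

theorem diagPoint_apply_of_notMem {i : ι} (hi : i ∉ C) (hit : i ≠ t) :
    diagPoint C t d j y s i = d i j := by
  rw [diagPoint, update_of_ne hit, dif_neg hi]

theorem diagPoint_apply_of_ne (s' : Alpha (κ t)) {i : ι} (hit : i ≠ t) :
    diagPoint C t d j y s i = diagPoint C t d j y s' i := by
  simp only [diagPoint, update_of_ne hit]

variable {Γ : (∀ i : C, (κ i).ord.ToType) × ℕ ↪ (κ t).ord.ToType}

theorem diagPoint_graph_ne_infty (htC : t ∉ C) (i : ι) :
    diagPoint C t d j y (Γ (y, j)) i ≠ ∞ := by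
  by_cases hi : i ∈ C
  · simp [diagPoint_apply_of_mem htC hi]
  by_cases hit : i = t
  · subst hit; simp
  · simp [diagPoint_apply_of_notMem hi hit]

theorem injective_diagPoint_graph {i : ι} (hi : i ∉ C) :
    Injective fun j => diagPoint C t d j y (Γ (y, j)) i := by
  intro j j' h
  by_cases hit : i = t
  · subst hit
    simpa using h
  · simpa [diagPoint_apply_of_notMem hi hit] using h

theorem diagGraph_fiber_subsingleton (htC : t ∉ C) {a : ι} (ha : a ∉ C) (x : ∀ i, Alpha (κ i)) :
    {p ∈ diagGraph C t d Γ | ∀ i ∈ insert a C, p i = x i}.Subsingleton := by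
  rintro _ ⟨⟨⟨y, j⟩, rfl⟩, hx⟩ _ ⟨⟨⟨y', j'⟩, rfl⟩, hx'⟩
  have hy : y = y' := funext fun i => coe_injective <| by
    simpa [diagPoint_apply_of_mem htC i.2] using
      (hx i (Finset.mem_insert_of_mem i.2)).trans (hx' i (Finset.mem_insert_of_mem i.2)).symm
  subst hy
  have hj : j = j' := injective_diagPoint_graph ha
    ((hx a (Finset.mem_insert_self a C)).trans (hx' a (Finset.mem_insert_self a C)).symm)
  subst hj
  rfl

theorem isClopen_diagGraph (htC : t ∉ C) {A : Finset ι} (hCA : C ⊆ A)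
    (hA : A.card = C.card + 1) :
    IsClopen (Subtype.val ⁻¹' diagGraph C t d Γ : Set (DD κ A)) := by
  obtain ⟨a, ha, rfl⟩ := Finset.exists_eq_insert_iff.2 ⟨hCA, hA.symm⟩
  refine isClopen_preimage_val_of_finite_fibers ?_ fun x hx => ?_
  · rintro _ ⟨⟨y, j⟩, rfl⟩
    exact diagPoint_graph_ne_infty htC
  · exact (diagGraph_fiber_subsingleton htC ha x).finite.subset
      fun p ⟨hp, hpx⟩ => ⟨hp, fun i hi => hpx i (hx i hi)⟩

theorem isCocycle_facetIndicator_diagGraph (htC : t ∉ C) :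
    IsCocycle κ C.card (facetIndicator C (diagGraph C t d Γ)) :=
  ⟨isCochain_facetIndicator C fun _ hCA hA => isClopen_diagGraph htC hCA hA,
    fun _ hA x => cb_facetIndicator C _ hA x⟩

theorem exists_diagPoint_mem_box_extendInfty (htC : t ∉ C) (y : ∀ i : C, (κ i).ord.ToType)
    {E : ∀ i, Set ((κ i).ord.ToType)} (hE : ∀ i, (E i).Finite) :
    ∃ j, diagPoint C t d j y (Γ (y, j)) ∈ box (extendInfty κ C y) E := by
  have hbad : (⋃ i : {i // i ∉ C}, (fun j => diagPoint C t d j y (Γ (y, j)) i) ⁻¹'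
      ((↑) '' E i)).Finite :=
    Set.finite_iUnion fun i => ((hE i).image _).preimage (injective_diagPoint_graph i.2).injOn
  obtain ⟨j, hj⟩ := hbad.infinite_compl.nonempty
  refine ⟨j, mem_box.2 fun i => ?_⟩
  by_cases hi : i ∈ C
  · exact Or.inl (by rw [diagPoint_apply_of_mem htC hi, extendInfty_apply_of_mem hi])
  · exact Or.inr ⟨extendInfty_apply_of_notMem hi, fun h => hj (Set.mem_iUnion.2 ⟨⟨i, hi⟩, h⟩)⟩

theorem update_diagPoint_update (htC : t ∉ C) (j : ℕ) (y : ∀ i : C, (κ i).ord.ToType) (a : C)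
    (v : (κ a).ord.ToType) (s : Alpha (κ t)) :
    update (diagPoint C t d j (update y a v) s) a ∞ =
      update (diagPoint C t d j y s) a ∞ := by
  funext i
  rcases eq_or_ne i a with rfl | hia
  · simp
  rw [update_of_ne hia, update_of_ne hia]
  by_cases hi : i ∈ C
  · rw [diagPoint_apply_of_mem htC hi, diagPoint_apply_of_mem htC hi,
      update_of_ne fun h => hia (congrArg Subtype.val h)]
  · rcases eq_or_ne i t with rfl | hit
    · simp
    · rw [diagPoint_apply_of_notMem hi hit, diagPoint_apply_of_notMem hi hit]

theorem diagPoint_mem_box_face (htC : t ∉ C) (a : C)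
    {γ : (κ t).ord.ToType} {E : ∀ i, Set ((κ i).ord.ToType)} (hya : y a ∉ E a) (hγ : γ ∉ E t) :
    diagPoint C t d j y γ ∈ box (update (diagPoint C t d j y ∞) a ∞) E := by
  refine mem_box.2 fun i => ?_
  rcases eq_or_ne i a with rfl | hia
  · refine Or.inr ⟨update_self _ _ _, ?_⟩
    simpa [diagPoint_apply_of_mem htC a.2] using hya
  rcases eq_or_ne i t with rfl | hit
  · exact Or.inr ⟨by simp [update_of_ne hia], by simpa using hγ⟩
  · exact Or.inl (by rw [update_of_ne hia]; exact diagPoint_apply_of_ne _ hit)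

theorem exists_avoiding_forbidden_sets (hunc : ∀ i ∈ C, ℵ₀ < κ i) (hinj : Set.InjOn κ C)
    (F : C → ℕ → (∀ i : C, (κ i).ord.ToType) → ∀ i, Set ((κ i).ord.ToType))
    (hF : ∀ a j y i, (F a j y i).Finite)
    (hdep : ∀ a j y v, F a j (update y a v) = F a j y) :
    ∃ y : ∀ i : C, (κ i).ord.ToType, ∀ a j, y a ∉ F a j y a ∧ Γ (y, j) ∉ F a j y t := by
  have hΓ : ∀ (a : C) j y,
      Injective fun v : (κ a).ord.ToType => Γ (update y a v, j) :=
    fun a j y v w h => by simpa using congrArg (fun p => p.1 a) (Γ.injective h)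
  obtain ⟨y, hy⟩ := exists_forall_notMem_of_countable (τ := fun a : C => (κ a).ord.ToType)
    (fun a => by simpa using hunc a a.2)
    (fun a b h => Subtype.ext (hinj a.2 b.2 (by simpa using h)))
    (fun a y => ⋃ j, F a j y a ∪ (fun v => Γ (update y a v, j)) ⁻¹' F a j y t)
    (fun a y => Set.countable_iUnion fun j => ((hF a j y a).union ((hF a j y t).preimage
      (hΓ a j y).injOn)).countable)
    (fun a y v => by simp only [hdep, update_idem])
  have hy' : ∀ (a : C) j, y a ∉ F a j y a ∧ Γ (y, j) ∉ F a j y t := by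
    simpa [not_or] using hy
  exact ⟨y, hy'⟩

theorem not_isCoboundary_facetIndicator_diagGraph {w : ι} (htC : t ∉ C) (hwC : w ∉ C)
    (hwt : w ≠ t) (hC : C.Nonempty) (hunc : ∀ i ∈ C, ℵ₀ < κ i) (hinj : Set.InjOn κ C) :
    ¬ IsCoboundary κ C.card (facetIndicator C (diagGraph C t d Γ)) := by
  rintro ⟨g, hg, hfg⟩
  set A := insert w C
  have hA : A.card = C.card + 1 := Finset.card_insert_of_notMem hwC
  have htA : t ∉ A := by simp [A, htC, hwt.symm]
  choose F hFfin hF using fun i (hi : i ∈ A) (x₀ : DD κ (A.erase i)) =>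
    (hg (A.erase i) (by rw [Finset.card_erase_of_mem hi, hA]; have := hC.card_pos; omega)
      ).exists_box_const x₀
  have hface : ∀ j y (a : C), update (diagPoint C t d j y ∞) a ∞ ∈ DD κ (A.erase a) := by
    intro j y a i hi
    obtain ⟨hia, hiA⟩ := Finset.mem_erase.1 hi
    rw [update_of_ne hia,
      diagPoint_apply_of_ne (Γ (y, j) : Alpha (κ t)) (ne_of_mem_of_not_mem hiA htA)]
    exact diagPoint_graph_ne_infty htC i
  obtain ⟨y, hy⟩ := exists_avoiding_forbidden_sets (Γ := Γ) hunc hinj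
    (fun a j y => F a (Finset.mem_insert_of_mem a.2) ⟨_, hface j y a⟩) (fun _ _ _ => hFfin _ _ _)
    (fun a j y v => by simp only [update_diagPoint_update htC])
  have hcorner : extendInfty κ C y ∈ DD κ (A.erase w) := by
    simpa [A, Finset.erase_insert hwC] using extendInfty_mem κ C y
  obtain ⟨j, hj⟩ := exists_diagPoint_mem_box_extendInfty (d := d) (Γ := Γ) htC y
    (hFfin w (Finset.mem_insert_self w C) ⟨_, hcorner⟩)
  set x := diagPoint C t d j y (Γ (y, j))
  have hx : x ∈ DD κ A := fun i _ => diagPoint_graph_ne_infty htC i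
  have hx' : update x t ∞ ∈ DD κ A := fun i hi => by
    rw [update_of_ne (ne_of_mem_of_not_mem hi htA)]
    exact hx i hi
  have hcb := cb_apply_update_infty (g := g) hx hx' fun i hi => by
    rcases Finset.mem_insert.1 hi with rfl | hiC
    · exact ⟨⟨_, hcorner⟩, _, extendInfty_apply_of_notMem htC, hj, hF i hi _⟩
    · refine ⟨⟨_, hface j y ⟨i, hiC⟩⟩, _, ?_, diagPoint_mem_box_face htC ⟨i, hiC⟩
        (hy ⟨i, hiC⟩ j).1 (hy ⟨i, hiC⟩ j).2, hF i hi _⟩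
      simp [update_of_ne (ne_of_mem_of_not_mem hiC htC).symm]
  have h1 := hfg A hA ⟨x, hx⟩
  have h0 := hfg A hA ⟨_, hx'⟩
  rw [facetIndicator_apply_of_subset C (Finset.subset_insert w C) hA] at h1 h0
  have hxS : x ∈ diagGraph C t d Γ := ⟨(y, j), rfl⟩
  have hx'S : update x t ∞ ∉ diagGraph C t d Γ := fun ⟨_, h⟩ => by
    simpa using congrFun h t
  rw [Set.indicator_of_mem hxS] at h1
  rw [Set.indicator_of_notMem hx'S] at h0
  exact one_ne_zero (h1.trans (hcb.trans h0.symm))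

end Construction

theorem exists_isCocycle_not_isCoboundary {κ : ι → Cardinal.{0}} {C : Finset ι} {t w : ι}
    (htC : t ∉ C) (hwC : w ∉ C) (hwt : w ≠ t) (hC : C.Nonempty) (hinf : ∀ i, ℵ₀ ≤ κ i)
    (hunc : ∀ i ∈ C, ℵ₀ < κ i) (hinj : Set.InjOn κ C) (htop : ∀ i ∈ C, κ i < κ t) :
    ∃ f : Cochain κ, IsCocycle κ C.card f ∧ ¬ IsCoboundary κ C.card f := by
  have hd : ∀ i, Nonempty (ℕ ↪ (κ i).ord.ToType) := fun i => by
    rw [← Cardinal.le_def, mk_nat, mk_ord_toType]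
    exact hinf i
  have hΓ : Nonempty ((∀ i : C, (κ i).ord.ToType) × ℕ ↪ (κ t).ord.ToType) := by
    obtain ⟨c, hc⟩ := hC
    rw [← Cardinal.le_def, mk_prod, lift_id, lift_id, mk_nat, mk_ord_toType]
    exact (mk_pi_mul_aleph0_lt (τ := fun i : C => (κ i).ord.ToType)
      ((hunc c hc).trans (htop c hc)) fun i => (mk_ord_toType _).trans_lt (htop i i.2)).le
  exact ⟨_, isCocycle_facetIndicator_diagGraph (d := fun i => (hd i).some) (Γ := hΓ.some) htC,
    not_isCoboundary_facetIndicator_diagGraph htC hwC hwt hC hunc hinj⟩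

theorem exists_isCocycle_not_isCoboundary_fin {N : ℕ} (z k : ℕ) (hz : 0 < z) (hk : 0 < k)
    (hN : z + k + 1 = N) (κ : Fin N → Cardinal)
    (h0 : ∀ i : Fin N, (i : ℕ) < z → κ i = ℵ₀) (h1 : ∀ i : Fin N, z ≤ (i : ℕ) → ℵ₀ < κ i)
    (h2 : ∀ i j : Fin N, z ≤ (i : ℕ) → i < j → κ i < κ j) :
    ∃ f : Cochain κ, IsCocycle κ k f ∧ ¬ IsCoboundary κ k f := by
  subst hN
  set C : Finset (Fin (z + k + 1)) := Finset.Ico ⟨z, by omega⟩ ⟨z + k, by omega⟩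
  have hmemC : ∀ i, i ∈ C ↔ z ≤ (i : ℕ) ∧ (i : ℕ) < z + k := fun i => by
    simp [C, Fin.le_def, Fin.lt_def]
  have hCk : C.card = k := by simp [C, Fin.card_Ico]
  suffices h : ∃ f : Cochain κ, IsCocycle κ C.card f ∧ ¬ IsCoboundary κ C.card f by rwa [hCk] at h
  refine exists_isCocycle_not_isCoboundary (t := ⟨z + k, by omega⟩) (w := ⟨0, by omega⟩)
    (by simp [hmemC]) (by simp [hmemC]; omega) (by simp [Fin.ext_iff]; omega)
    ⟨⟨z, by omega⟩, by simp [hmemC]; omega⟩ (fun i => ?_) (fun i hi => h1 i ((hmemC i).1 hi).1)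
    (fun i hi j hj hij => ?_) (fun i hi => h2 i _ ((hmemC i).1 hi).1 ?_)
  · rcases Nat.lt_or_ge i z with hiz | hiz
    · exact (h0 i hiz).ge
    · exact (h1 i hiz).le
  · rcases lt_trichotomy i j with hlt | rfl | hlt
    · exact absurd hij (h2 i j ((hmemC i).1 hi).1 hlt).ne
    · rfl
    · exact absurd hij (h2 j i ((hmemC j).1 hj).1 hlt).ne'
  · simpa [Fin.lt_def] using ((hmemC i).1 hi).2

/-- For `z, k > 0` and `κ` consisting of `z` copies of `ℵ₀` followed by `k` strictly increasing
uncountable cardinals, `H^k(X(κ)⁻, ℤ/2) ≠ 0`. In particular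
`H^n(X(ℵ₀, ℵ₁, …, ℵ_{n+1})⁻, ℤ/2) ≠ 0` for every `n ≥ 1`. -/
theorem stmt19 (z k : ℕ) (hz : 0 < z) (hk : 0 < k)
    (κ : Fin (z + k + 1) → Cardinal)
    (h0 : ∀ i : Fin (z + k + 1), (i : ℕ) < z → κ i = ℵ₀)
    (h1 : ∀ i : Fin (z + k + 1), z ≤ (i : ℕ) → ℵ₀ < κ i)
    (h2 : ∀ i j : Fin (z + k + 1), z ≤ (i : ℕ) → i < j → κ i < κ j) :
    (∃ f : Cochain κ, IsCocycle κ k f ∧ ¬ IsCoboundary κ k f) ∧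
    ∀ n : ℕ, 1 ≤ n → ∀ μ : Fin (n + 2) → Cardinal,
      (∀ i : Fin (n + 2), μ i = Cardinal.aleph (i : ℕ)) →
      ∃ f : Cochain μ, IsCocycle μ n f ∧ ¬ IsCoboundary μ n f := by
  refine ⟨exists_isCocycle_not_isCoboundary_fin z k hz hk rfl κ h0 h1 h2, fun n hn μ hμ => ?_⟩
  refine exists_isCocycle_not_isCoboundary_fin 1 n one_pos hn (by omega) μ (fun i hi => ?_)
    (fun i hi => ?_) (fun i j _ hij => ?_)
  · rw [hμ, show (i : ℕ) = 0 by omega, Nat.cast_zero, aleph_zero]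
  · rw [hμ, aleph0_lt_aleph]
    exact_mod_cast hi
  · rw [hμ, hμ, aleph_lt_aleph]
    exact_mod_cast hij

end
end
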